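/- arXiv:1505.05852 — 9 statements merged into one kernel-verified Lean document; each statement's English description precedes it below -/
import Mathlib

section
/- For a fixed linear order (axis) on a set of m candidates (m ≥ 1), the number of linear orders (votes) on the candidates that are single-peaked with respect to this axis is exactly 2^(m-1). -/
/-!
Relabelling the candidates along the axis reduces the count to the identity axis. There a vote
is single-peaked iff, for every candidate, all better-ranked candidates lie on the same side of
it; so, going down the ranking, the set of candidates seen so far is an interval that grows by
one candidate to the left or to the right at each rank after the first. The vote is therefore
determined by the set of nonzero ranks that go to the left of the peak, and every such set
occurs.
-/

/-- A vote `V` (linear order given by its rank function: `V c` is the rank of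
candidate `c`, smaller rank = more preferred) is single-peaked with respect to the
axis `A` (also given by positions on the axis) if no three candidates form a valley:
`c₁ <_A c₂ <_A c₃` with `c₂` ranked below both `c₁` and `c₃`. -/
def SPwrt {m : ℕ} (V A : Equiv.Perm (Fin m)) : Prop :=
  ∀ c₁ c₂ c₃ : Fin m, ¬(A c₁ < A c₂ ∧ A c₂ < A c₃ ∧ V c₁ < V c₂ ∧ V c₃ < V c₂)

open Finset

namespace SPwrt

theorem mul_right_iff {m : ℕ} (V A B : Equiv.Perm (Fin m)) :
    SPwrt (V * B) (A * B) ↔ SPwrt V A := by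
  constructor
  · intro h c₁ c₂ c₃ hc
    exact h (B.symm c₁) (B.symm c₂) (B.symm c₃) (by simpa using hc)
  · intro h c₁ c₂ c₃ hc
    exact h (B c₁) (B c₂) (B c₃) hc

theorem ncard_eq_ncard_one {m : ℕ} (A : Equiv.Perm (Fin m)) :
    {V : Equiv.Perm (Fin m) | SPwrt V A}.ncard =
      {U : Equiv.Perm (Fin m) | SPwrt U 1}.ncard := by
  have himage : (· * A) '' {U : Equiv.Perm (Fin m) | SPwrt U 1} = {V | SPwrt V A} := by
    ext V
    constructor
    · rintro ⟨U, hU, rfl⟩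
      simpa using (mul_right_iff U 1 A).2 hU
    · intro hV
      refine ⟨V * A⁻¹, (mul_right_iff (V * A⁻¹) 1 A).1 ?_, inv_mul_cancel_right V A⟩
      simpa using hV
  rw [← himage, Set.ncard_image_of_injective _ (mul_left_injective A)]

theorem one_iff {m : ℕ} (V : Equiv.Perm (Fin m)) :
    SPwrt V 1 ↔
      ∀ i j k : Fin m, i < k → j < k → ¬(V.symm i < V.symm k ∧ V.symm k < V.symm j) := by
  constructor
  · rintro h i j k hik hjk ⟨hi, hj⟩
    exact h (V.symm i) (V.symm k) (V.symm j) ⟨hi, hj, by simpa using hik, by simpa using hjk⟩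
  · rintro h c₁ c₂ c₃ ⟨h12, h23, v12, v32⟩
    exact h (V c₁) (V c₃) (V c₂) v12 v32 ⟨by simpa using h12, by simpa using h23⟩

end SPwrt

theorem card_filter_apply_lt {α : Type*} [Fintype α] {k : ℕ} (e : α ≃ Fin k) (b : Fin k) :
    #{x | e x < b} = b := by
  rw [card_equiv e (t := {y | y < b}) (by simp), filter_gt_eq_Iio, Fin.card_Iio]

theorem card_filter_lt_apply {α : Type*} [Fintype α] {k : ℕ} (e : α ≃ Fin k) (b : Fin k) :
    #{x | b < e x} = k - 1 - b := by
  rw [card_equiv e (t := {y | b < y}) (by simp), filter_lt_eq_Ioi, Fin.card_Ioi]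

section IdentityAxis

variable {n : ℕ}

def leftRanks (V : Equiv.Perm (Fin (n + 1))) : Finset (Fin (n + 1)) :=
  {r | V.symm r < V.symm 0}

theorem zero_notMem_leftRanks (V : Equiv.Perm (Fin (n + 1))) : 0 ∉ leftRanks V := by
  simp [leftRanks]

theorem filter_symm_lt_eq_of_mem_leftRanks {V : Equiv.Perm (Fin (n + 1))} (h : SPwrt V 1)
    {r : Fin (n + 1)} (hr : r ∈ leftRanks V) :
    ({r' | V.symm r' < V.symm r} : Finset _) = (leftRanks V).filter (r < ·) := by
  have hV := (SPwrt.one_iff V).1 h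
  simp only [leftRanks, mem_filter, mem_univ, true_and] at hr ⊢
  ext r'
  simp only [mem_filter, mem_univ, true_and]
  constructor
  · intro hlt
    refine ⟨hlt.trans hr, lt_of_not_ge fun hle => ?_⟩
    have hr0 : 0 < r := Fin.pos_iff_ne_zero.2 (by rintro rfl; exact hr.false)
    exact hV r' 0 r (lt_of_le_of_ne hle (by rintro rfl; exact hlt.false)) hr0 ⟨hlt, hr⟩
  · rintro ⟨hr'0, hrr'⟩
    refine lt_of_not_ge fun hle => ?_
    have hne : V.symm r ≠ V.symm r' := fun he => hrr'.ne (V.symm.injective he)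
    exact hV r 0 r' hrr' (pos_of_gt hrr') ⟨lt_of_le_of_ne hle hne, hr'0⟩

theorem filter_lt_symm_eq_of_notMem_leftRanks {V : Equiv.Perm (Fin (n + 1))} (h : SPwrt V 1)
    {r : Fin (n + 1)} (hr : r ∉ leftRanks V) :
    ({r' | V.symm r < V.symm r'} : Finset _) = (leftRanks V)ᶜ.filter (r < ·) := by
  have hV := (SPwrt.one_iff V).1 h
  simp only [leftRanks, mem_filter, mem_univ, true_and, not_lt] at hr
  ext r'
  simp only [leftRanks, mem_compl, mem_filter, mem_univ, true_and, not_lt]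
  constructor
  · intro hlt
    refine ⟨hr.trans hlt.le, lt_of_not_ge fun hle => ?_⟩
    have hr'r : r' < r := lt_of_le_of_ne hle (by rintro rfl; exact hlt.false)
    have hne : V.symm 0 ≠ V.symm r := fun he => (pos_of_gt hr'r).ne (V.symm.injective he)
    exact hV 0 r' r (pos_of_gt hr'r) hr'r ⟨lt_of_le_of_ne hr hne, hlt⟩
  · rintro ⟨hr'0, hrr'⟩
    refine lt_of_not_ge fun hle => ?_
    have hne : V.symm r' ≠ V.symm r := fun he => hrr'.ne' (V.symm.injective he)
    have hne0 : V.symm 0 ≠ V.symm r' := fun he => (pos_of_gt hrr').ne (V.symm.injective he)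
    exact hV 0 r r' (pos_of_gt hrr') hrr' ⟨lt_of_le_of_ne hr'0 hne0, lt_of_le_of_ne hle hne⟩

/-- The axis position of the candidate of rank `r` in the single-peaked vote whose left ranks
are `S`: the ranks in `S` are laid out leftwards and the other ranks rightwards, each in
increasing order, so a rank's distance to its end of the axis is the number of worse ranks on
its side. -/
def axisPosition (S : Finset (Fin (n + 1))) (r : Fin (n + 1)) : ℕ :=
  if r ∈ S then #(S.filter (r < ·)) else n - #(Sᶜ.filter (r < ·))

theorem SPwrt.symm_apply_eq_axisPosition {V : Equiv.Perm (Fin (n + 1))} (h : SPwrt V 1)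
    (r : Fin (n + 1)) : (V.symm r : ℕ) = axisPosition (leftRanks V) r := by
  unfold axisPosition
  split_ifs with hr
  · rw [← filter_symm_lt_eq_of_mem_leftRanks h hr, card_filter_apply_lt]
  · rw [← filter_lt_symm_eq_of_notMem_leftRanks h hr, card_filter_lt_apply]
    omega

theorem injOn_leftRanks :
    Set.InjOn leftRanks {V : Equiv.Perm (Fin (n + 1)) | SPwrt V 1} := by
  intro V hV W hW hVW
  refine Equiv.symm_bijective.injective (Equiv.ext fun r => Fin.ext ?_)
  rw [SPwrt.symm_apply_eq_axisPosition hV, SPwrt.symm_apply_eq_axisPosition hW, hVW]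

section axisPosition

variable {S : Finset (Fin (n + 1))} {r : Fin (n + 1)}

theorem axisPosition_lt_card (hr : r ∈ S) : axisPosition S r < #S := by
  rw [axisPosition, if_pos hr]
  exact card_lt_card (filter_ssubset.2 ⟨r, hr, lt_irrefl r⟩)

theorem card_filter_lt_add_card_le (hr : r ∉ S) : #(Sᶜ.filter (r < ·)) + #S ≤ n := by
  have hlt : #(Sᶜ.filter (r < ·)) < #Sᶜ :=
    card_lt_card (filter_ssubset.2 ⟨r, mem_compl.2 hr, lt_irrefl r⟩)
  have hS := card_le_univ S
  rw [card_compl] at hlt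
  rw [Fintype.card_fin] at hlt hS
  omega

theorem card_le_axisPosition (hr : r ∉ S) : #S ≤ axisPosition S r := by
  rw [axisPosition, if_neg hr]
  have := card_filter_lt_add_card_le hr
  omega

theorem axisPosition_le (S : Finset (Fin (n + 1))) (r : Fin (n + 1)) : axisPosition S r ≤ n := by
  by_cases hr : r ∈ S
  · have hS := card_le_univ S
    rw [Fintype.card_fin] at hS
    exact Nat.lt_succ_iff.1 ((axisPosition_lt_card hr).trans_le hS)
  · rw [axisPosition, if_neg hr]
    exact Nat.sub_le _ _

theorem axisPosition_zero (h0 : 0 ∉ S) : axisPosition S 0 = #S := by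
  have hfilter : Sᶜ.filter (0 < ·) = Sᶜ.erase 0 := by
    ext r
    simp [Fin.pos_iff_ne_zero, and_comm]
  rw [axisPosition, if_neg h0, hfilter, card_erase_of_mem (mem_compl.2 h0), card_compl,
    Fintype.card_fin]
  have := card_filter_lt_add_card_le h0
  have := card_le_univ S
  rw [Fintype.card_fin] at this
  omega

theorem strictAntiOn_axisPosition (S : Finset (Fin (n + 1))) :
    StrictAntiOn (axisPosition S) S := by
  intro r₁ hr₁ r₂ hr₂ h12
  simp only [axisPosition, if_pos (mem_coe.1 hr₁), if_pos (mem_coe.1 hr₂)]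
  refine card_lt_card ((ssubset_iff_of_subset ?_).2 ⟨r₂, ?_, ?_⟩)
  · exact monotone_filter_right S fun _ _ h => h12.trans h
  · simpa [h12] using hr₂
  · simp

theorem strictMonoOn_axisPosition (S : Finset (Fin (n + 1))) :
    StrictMonoOn (axisPosition S) (↑S)ᶜ := by
  intro r₁ hr₁ r₂ hr₂ h12
  have hr₁ : r₁ ∉ S := hr₁
  have hr₂ : r₂ ∉ S := hr₂
  simp only [axisPosition, if_neg hr₁, if_neg hr₂]
  have hsub : Sᶜ.filter (r₂ < ·) ⊂ Sᶜ.filter (r₁ < ·) := by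
    refine (ssubset_iff_of_subset ?_).2 ⟨r₂, ?_, ?_⟩
    · exact monotone_filter_right _ fun _ _ h => h12.trans h
    · simpa [h12] using hr₂
    · simp
  have := card_filter_lt_add_card_le hr₁
  have := card_lt_card hsub
  omega

theorem axisPosition_injective (S : Finset (Fin (n + 1))) :
    Function.Injective (axisPosition S) := by
  have hsides :
      ∀ {r₁ r₂}, r₁ ∈ S → r₂ ∉ S → axisPosition S r₁ ≠ axisPosition S r₂ :=
    fun h₁ h₂ => ((axisPosition_lt_card h₁).trans_le (card_le_axisPosition h₂)).ne
  intro r₁ r₂ he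
  by_cases h₁ : r₁ ∈ S <;> by_cases h₂ : r₂ ∈ S
  · exact (strictAntiOn_axisPosition S).injOn h₁ h₂ he
  · exact absurd he (hsides h₁ h₂)
  · exact absurd he.symm (hsides h₂ h₁)
  · exact (strictMonoOn_axisPosition S).injOn h₁ h₂ he

end axisPosition

noncomputable def positionPerm (S : Finset (Fin (n + 1))) : Equiv.Perm (Fin (n + 1)) :=
  Equiv.ofBijective (fun r => ⟨axisPosition S r, Nat.lt_succ_of_le (axisPosition_le S r)⟩)
    (Finite.injective_iff_bijective.1 fun _ _ he =>
      axisPosition_injective S (congrArg Fin.val he))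

theorem val_positionPerm (S : Finset (Fin (n + 1))) (r : Fin (n + 1)) :
    (positionPerm S r : ℕ) = axisPosition S r :=
  rfl

theorem sPwrt_positionPerm_symm (S : Finset (Fin (n + 1))) :
    SPwrt (positionPerm S).symm 1 := by
  rw [SPwrt.one_iff]
  rintro i j k hik hjk ⟨hi, hj⟩
  simp only [Equiv.symm_symm, Fin.lt_def, val_positionPerm] at hi hj
  by_cases hk : k ∈ S
  · by_cases hiS : i ∈ S
    · exact (strictAntiOn_axisPosition S hiS hk hik).not_gt hi
    · exact (axisPosition_lt_card hk).not_ge ((card_le_axisPosition hiS).trans hi.le)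
  · by_cases hjS : j ∈ S
    · exact (axisPosition_lt_card hjS).not_ge ((card_le_axisPosition hk).trans hj.le)
    · exact (strictMonoOn_axisPosition S hjS hk hjk).not_gt hj

theorem leftRanks_positionPerm_symm {S : Finset (Fin (n + 1))} (h0 : 0 ∉ S) :
    leftRanks (positionPerm S).symm = S := by
  ext r
  simp only [leftRanks, Equiv.symm_symm, mem_filter, mem_univ, true_and, Fin.lt_def,
    val_positionPerm, axisPosition_zero h0]
  exact ⟨fun h => by_contra fun hr => (card_le_axisPosition hr).not_gt h, axisPosition_lt_card⟩

theorem image_leftRanks :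
    leftRanks '' {V : Equiv.Perm (Fin (n + 1)) | SPwrt V 1} = {S | 0 ∉ S} := by
  ext S
  constructor
  · rintro ⟨V, -, rfl⟩
    exact zero_notMem_leftRanks V
  · intro h0
    exact ⟨(positionPerm S).symm, sPwrt_positionPerm_symm S, leftRanks_positionPerm_symm h0⟩

end IdentityAxis

theorem ncard_setOf_notMem_finset {α : Type*} [Fintype α] [DecidableEq α] (a : α) :
    {S : Finset α | a ∉ S}.ncard = 2 ^ (Fintype.card α - 1) := by
  have hS : {S : Finset α | a ∉ S} = ↑(univ.erase a).powerset := by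
    ext S
    rw [Set.mem_ofPred_eq, mem_coe, mem_powerset, subset_erase]
    simp
  rw [hS, Set.ncard_coe_finset, card_powerset, card_erase_of_mem (mem_univ a), card_univ]

/-- For a fixed axis on `m ≥ 1` candidates, exactly `2^(m-1)` votes are
single-peaked with respect to this axis. -/
theorem count_votes_single_peaked_wrt_axis (m : ℕ) (hm : 1 ≤ m)
    (A : Equiv.Perm (Fin m)) :
    {V : Equiv.Perm (Fin m) | SPwrt V A}.ncard = 2 ^ (m - 1) := by
  obtain ⟨n, rfl⟩ := Nat.exists_eq_add_of_le' hm
  rw [SPwrt.ncard_eq_ncard_one, ← injOn_leftRanks.ncard_image, image_leftRanks,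
    ncard_setOf_notMem_finset, Fintype.card_fin]
end

section
/- Let π be a k-permutation and τ an m-permutation. Consider the (3,m)-election with candidates c_1,…,c_m and votes V1 = V2 = c_1 > c_2 > … > c_m and V3 = c_{τ(1)} > … > c_{τ(m)}, and the (3,k)-configuration with elements x_1,…,x_k and orders T1 = T2 = x_1 > … > x_k and T3 = x_{π(1)} > … > x_{π(k)}. Then the election contains the configuration if and only if τ contains π as a permutation pattern. -/
structure Election where
  nvoters : ℕ
  ncands : ℕ
  votes : Fin nvoters → Equiv.Perm (Fin ncands)

def ElectionContains (E F : Election) : Prop :=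
  ∃ f : Fin F.nvoters → Fin E.nvoters, ∃ g : Fin F.ncands → Fin E.ncands,
    Function.Injective f ∧ Function.Injective g ∧
    ∀ (i : Fin F.nvoters) (x y : Fin F.ncands),
      F.votes i x < F.votes i y → E.votes (f i) (g x) < E.votes (f i) (g y)

/-- The `m`-permutation `τ` contains the `k`-permutation `π` as a pattern:
there is a strictly increasing `μ : Fin k → Fin m` such that
`(μ(π 0), …, μ(π (k-1)))` is a subsequence of `(τ 0, …, τ (m-1))`,
the positions of the subsequence being given by a strictly increasing `ρ`. -/
def PatternContains {m k : ℕ} (τ : Equiv.Perm (Fin m)) (π : Equiv.Perm (Fin k)) : Prop :=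
  ∃ μ ρ : Fin k → Fin m, StrictMono μ ∧ StrictMono ρ ∧ ∀ j, τ (ρ j) = μ (π j)

/-!
Votes are rank functions, so the order `T` is embedded into the vote `V` by `g` exactly when
`V ∘ g ∘ T⁻¹` is strictly increasing. Since `f` permutes the three voters, at least one of the
two identity orders of the configuration lands on an identity vote, so `g` is increasing. If the
third order lands on the third vote, `ρ := τ⁻¹ ∘ g ∘ π` is increasing; otherwise some identity
order lands on the third vote, so `τ⁻¹ ∘ g` is increasing, and the third order lands on an
identity vote, so `g ∘ π`, hence `π`, is increasing. Conversely `f = id`, `g = μ` works, since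
`ρ = τ⁻¹ ∘ μ ∘ π`.
-/

open Function

theorem Equiv.Perm.strictMono_comp_inv_iff {α β : Type*} [Preorder α] [Preorder β]
    (σ : Equiv.Perm α) (h : α → β) :
    StrictMono (h ∘ ⇑σ⁻¹) ↔ ∀ x y, σ x < σ y → h x < h y := by
  refine ⟨fun H x y hxy => by simpa using H hxy, fun H a b hab => ?_⟩
  simpa using H (σ⁻¹ a) (σ⁻¹ b) (by simpa using hab)

theorem electionContains_iff_strictMono (E F : Election) :
    ElectionContains E F ↔ ∃ f g, Injective f ∧ Injective g ∧
      ∀ i, StrictMono (⇑(E.votes (f i)) ∘ g ∘ ⇑(F.votes i)⁻¹) := by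
  simp only [ElectionContains, ← comp_assoc, Equiv.Perm.strictMono_comp_inv_iff, comp_apply]

theorem patternContains_iff_strictMono {m k : ℕ} (τ : Equiv.Perm (Fin m))
    (π : Equiv.Perm (Fin k)) :
    PatternContains τ π ↔ ∃ μ : Fin k → Fin m, StrictMono μ ∧ StrictMono (⇑τ⁻¹ ∘ μ ∘ π) := by
  constructor
  · rintro ⟨μ, ρ, hμ, hρ, hτρ⟩
    have hρ_eq : ⇑τ⁻¹ ∘ μ ∘ π = ρ := funext fun j => by simp [← hτρ]
    exact ⟨μ, hμ, hρ_eq ▸ hρ⟩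
  · rintro ⟨μ, hμ, hρ⟩
    exact ⟨μ, _, hμ, hρ, fun j => by simp⟩

theorem Matrix.cons_cons_cons_apply_of_ne_two {α : Type*} (a b : α) {i : Fin 3} (hi : i ≠ 2) :
    ![a, a, b] i = a := by
  fin_cases i <;> simp_all

theorem Fin.exists_ne_two_apply_ne_two {f : Fin 3 → Fin 3} (hf : Injective f) :
    ∃ i, i ≠ 2 ∧ f i ≠ 2 := by
  by_cases h0 : f 0 = 2
  · exact ⟨1, by decide, fun h1 => absurd (hf (h0.trans h1.symm)) (by decide)⟩
  · exact ⟨0, by decide, h0⟩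

theorem Fin.exists_ne_two_apply_eq_two {f : Fin 3 → Fin 3} (hf : Injective f) (h2 : f 2 ≠ 2) :
    ∃ i, i ≠ 2 ∧ f i = 2 := by
  obtain ⟨i, hi⟩ := Finite.injective_iff_surjective.mp hf 2
  exact ⟨i, by rintro rfl; exact h2 hi, hi⟩

/-- The `(3,m)`-election with votes `V1 = V2 = c_1 > … > c_m`,
`V3 = c_{τ(1)} > … > c_{τ(m)}` (as rank functions: `V1 = V2 = id`, `V3 = τ⁻¹`)
contains the `(3,k)`-configuration with orders `T1 = T2 = x_1 > … > x_k`,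
`T3 = x_{π(1)} > … > x_{π(k)}` if and only if `τ` contains `π` as a pattern. -/
theorem election_contains_iff_pattern (k m : ℕ)
    (π : Equiv.Perm (Fin k)) (τ : Equiv.Perm (Fin m)) :
    ElectionContains ⟨3, m, ![1, 1, τ⁻¹]⟩ ⟨3, k, ![1, 1, π⁻¹]⟩ ↔
      PatternContains τ π := by
  rw [electionContains_iff_strictMono, patternContains_iff_strictMono]
  constructor
  · rintro ⟨f, g, hf, -, hvote⟩
    have hvote_ne_two : ∀ i ≠ 2, StrictMono (⇑(![1, 1, τ⁻¹] (f i)) ∘ g) := fun i hi => by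
      simpa [Matrix.cons_cons_cons_apply_of_ne_two _ _ hi] using hvote i
    have hvote_two : StrictMono (⇑(![1, 1, τ⁻¹] (f 2)) ∘ g ∘ π) := by simpa using hvote 2
    obtain ⟨i, hi, hfi⟩ := Fin.exists_ne_two_apply_ne_two hf
    have hg : StrictMono g := by
      simpa [Matrix.cons_cons_cons_apply_of_ne_two _ _ hfi] using hvote_ne_two i hi
    refine ⟨g, hg, ?_⟩
    by_cases h2 : f 2 = 2
    · simpa [h2] using hvote_two
    obtain ⟨j, hj, hfj⟩ := Fin.exists_ne_two_apply_eq_two hf h2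
    have hτg : StrictMono (⇑τ⁻¹ ∘ g) := by simpa [hfj] using hvote_ne_two j hj
    have hgπ : StrictMono (g ∘ π) := by
      simpa [Matrix.cons_cons_cons_apply_of_ne_two _ _ h2] using hvote_two
    exact hτg.comp fun a b hab => hg.lt_iff_lt.mp (hgπ hab)
  · rintro ⟨μ, hμ, hρ⟩
    refine ⟨id, μ, injective_id, hμ.injective, fun i => ?_⟩
    by_cases hi : i = 2
    · subst hi
      simpa using hρ
    · simpa [Matrix.cons_cons_cons_apply_of_ne_two _ _ hi] using hμ
end

section
/- Let (S,T) be a (2,k)-configuration with T = (T1,T2), and let V1 be a fixed linear order on C = {c_1,…,c_m}. The number of linear orders V2 on C such that the two-vote election (C,(V1,V2)) avoids (S,T) equals S_m(π, π^{-1}), the number of m-permutations avoiding both the pattern π = p(T1,T2) and its inverse π^{-1}. -/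
/-!
Writing `π = T₂ T₁⁻¹` and `σ = V₂ V₁⁻¹`, a candidate embedding `g` respecting `T₁ → V₁` and
`T₂ → V₂` is the same thing as an occurrence of `π` in `σ`: read `g` through the positions
`ρ = V₁ ∘ g ∘ T₁⁻¹` in the first vote and `μ = V₂ ∘ g ∘ T₂⁻¹` in the second. The only other way to
map the two configuration votes to the two election votes is crosswise, which gives an occurrence
of `π` in `σ⁻¹`, i.e. of `π⁻¹` in `σ`. So `(V₁, V₂)` avoids `(T₁, T₂)` iff `σ` avoids `π` and `π⁻¹`,
and `V₂ ↦ V₂ V₁⁻¹` is a bijection.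
-/

open Equiv

variable {k m : ℕ}

def RespectsVotes (A : Perm (Fin k)) (B : Perm (Fin m)) (g : Fin k → Fin m) : Prop :=
  ∀ x y, A x < A y → B (g x) < B (g y)

theorem PatternContains.inv {τ : Perm (Fin m)} {π : Perm (Fin k)} (h : PatternContains τ π) :
    PatternContains τ⁻¹ π⁻¹ := by
  obtain ⟨μ, ρ, hμ, hρ, hτ⟩ := h
  refine ⟨ρ, μ, hρ, hμ, fun j => ?_⟩
  rw [Perm.inv_eq_iff_eq, hτ]
  simp

theorem patternContains_inv_left_iff (τ : Perm (Fin m)) (π : Perm (Fin k)) :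
    PatternContains τ⁻¹ π ↔ PatternContains τ π⁻¹ :=
  ⟨fun h => by simpa using h.inv, fun h => by simpa using h.inv⟩

theorem exists_respectsVotes_iff_patternContains (A₁ A₂ : Perm (Fin k)) (B₁ B₂ : Perm (Fin m)) :
    (∃ g, Function.Injective g ∧ RespectsVotes A₁ B₁ g ∧ RespectsVotes A₂ B₂ g) ↔
      PatternContains (B₂ * B₁⁻¹) (A₂ * A₁⁻¹) := by
  constructor
  · rintro ⟨g, -, h₁, h₂⟩
    refine ⟨fun j => B₂ (g (A₂⁻¹ j)), fun j => B₁ (g (A₁⁻¹ j)), ?_, ?_, fun j => ?_⟩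
    · exact fun a b hab => h₂ _ _ (by simpa using hab)
    · exact fun a b hab => h₁ _ _ (by simpa using hab)
    · simp
  · rintro ⟨μ, ρ, hμ, hρ, hτ⟩
    refine ⟨fun x => B₁⁻¹ (ρ (A₁ x)), fun x y h => ?_, fun x y h => ?_, fun x y h => ?_⟩
    · simpa using hρ.injective (B₁⁻¹.injective h)
    · simpa using hρ h
    · have hx := hτ (A₁ x)
      have hy := hτ (A₁ y)
      simp only [Perm.mul_apply, Perm.coe_inv, Equiv.symm_apply_apply] at hx hy ⊢
      rw [hx, hy]
      exact hμ h

theorem electionContains_two_iff (T₁ T₂ : Perm (Fin k)) (V₁ V₂ : Perm (Fin m)) :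
    ElectionContains ⟨2, m, ![V₁, V₂]⟩ ⟨2, k, ![T₁, T₂]⟩ ↔
      ∃ g, Function.Injective g ∧
        (RespectsVotes T₁ V₁ g ∧ RespectsVotes T₂ V₂ g ∨
          RespectsVotes T₁ V₂ g ∧ RespectsVotes T₂ V₁ g) := by
  constructor
  · rintro ⟨f, g, hf, hg, hfg⟩
    change Fin 2 → Fin 2 at f
    have h₀ : RespectsVotes T₁ (![V₁, V₂] (f 0)) g := hfg 0
    have h₁ : RespectsVotes T₂ (![V₁, V₂] (f 1)) g := hfg 1
    have hne : f 0 ≠ f 1 := hf.ne (show (0 : Fin 2) ≠ 1 by decide)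
    refine ⟨g, hg, ?_⟩
    obtain hf₀ | hf₀ : f 0 = 0 ∨ f 0 = 1 := by omega
    all_goals obtain hf₁ | hf₁ : f 1 = 0 ∨ f 1 = 1 := by omega
    all_goals simp only [hf₀, hf₁, Matrix.cons_val_zero, Matrix.cons_val_one] at h₀ h₁ hne
    exacts [absurd rfl hne, .inl ⟨h₀, h₁⟩, .inr ⟨h₀, h₁⟩, absurd rfl hne]
  · rintro ⟨g, hg, ⟨h₁, h₂⟩ | ⟨h₁, h₂⟩⟩
    · exact ⟨id, g, Function.injective_id, hg, Fin.forall_fin_two.mpr ⟨h₁, h₂⟩⟩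
    · have hswap : Function.Injective (![1, 0] : Fin 2 → Fin 2) := by decide
      exact ⟨![1, 0], g, hswap, hg, Fin.forall_fin_two.mpr ⟨h₁, h₂⟩⟩

theorem electionContains_two_iff_patternContains (T₁ T₂ : Perm (Fin k)) (V₁ V₂ : Perm (Fin m)) :
    ElectionContains ⟨2, m, ![V₁, V₂]⟩ ⟨2, k, ![T₁, T₂]⟩ ↔
      PatternContains (V₂ * V₁⁻¹) (T₂ * T₁⁻¹) ∨ PatternContains (V₂ * V₁⁻¹) (T₂ * T₁⁻¹)⁻¹ := by
  rw [← patternContains_inv_left_iff, mul_inv_rev, inv_inv,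
    ← exists_respectsVotes_iff_patternContains, ← exists_respectsVotes_iff_patternContains,
    electionContains_two_iff]
  simp only [and_or_left, exists_or]

/-- For a `(2,k)`-configuration `(T₁,T₂)` and a fixed first vote `V₁` on `m`
candidates, the number of second votes `V₂` such that the two-vote election
`(V₁,V₂)` avoids the configuration equals `S_m(π, π⁻¹)`, the number of
`m`-permutations avoiding both `π = p(T₁,T₂) = T₂ ∘ T₁⁻¹` and its inverse. -/
theorem count_avoiding_second_votes (k m : ℕ)
    (T₁ T₂ : Equiv.Perm (Fin k)) (V₁ : Equiv.Perm (Fin m)) :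
    {V₂ : Equiv.Perm (Fin m) |
        ¬ ElectionContains ⟨2, m, ![V₁, V₂]⟩ ⟨2, k, ![T₁, T₂]⟩}.ncard =
      {σ : Equiv.Perm (Fin m) |
        ¬ PatternContains σ (T₂ * T₁⁻¹) ∧ ¬ PatternContains σ (T₂ * T₁⁻¹)⁻¹}.ncard := by
  have hset : {V₂ : Equiv.Perm (Fin m) |
        ¬ ElectionContains ⟨2, m, ![V₁, V₂]⟩ ⟨2, k, ![T₁, T₂]⟩} =
      Equiv.mulRight V₁⁻¹ ⁻¹' {σ : Equiv.Perm (Fin m) |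
        ¬ PatternContains σ (T₂ * T₁⁻¹) ∧ ¬ PatternContains σ (T₂ * T₁⁻¹)⁻¹} := by
    ext V₂
    simp [electionContains_two_iff_patternContains]
  rw [hset, Set.ncard_preimage_of_injective_subset_range (Equiv.injective _)
    ((Equiv.mulRight V₁⁻¹).range_eq_univ ▸ Set.subset_univ _)]
end

section
/- A two-vote election (C,(V1,V2)) with V1 fixed avoids all four (2,4)-configurations (dabc,dcba), (adbc,dcba), (dabc,cdba), (adbc,cdba) if and only if the permutation p(V1,V2) avoids the patterns 1432, 4132, 2431, and 4231. -/
/-- Build a permutation of `Fin 4` from explicit function tables. -/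
def mk4 (f g : Fin 4 → Fin 4) (h₁ : ∀ x, g (f x) = x) (h₂ : ∀ x, f (g x) = x) :
    Equiv.Perm (Fin 4) := ⟨f, g, h₁, h₂⟩

/- Linear orders on `{a,b,c,d}` (candidates `a = 0, b = 1, c = 2, d = 3`), given as
rank functions, e.g. `Tdabc` is `d > a > b > c`. -/
def Tdabc : Equiv.Perm (Fin 4) := mk4 ![1,2,3,0] ![3,0,1,2] (by decide) (by decide)
def Tdcba : Equiv.Perm (Fin 4) := mk4 ![3,2,1,0] ![3,2,1,0] (by decide) (by decide)
def Tadbc : Equiv.Perm (Fin 4) := mk4 ![0,2,3,1] ![0,3,1,2] (by decide) (by decide)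
def Tcdba : Equiv.Perm (Fin 4) := mk4 ![3,2,0,1] ![2,3,1,0] (by decide) (by decide)

/- The patterns 1432, 4132, 2431, 4231 (0-indexed as permutations of `Fin 4`). -/
def p1432 : Equiv.Perm (Fin 4) := mk4 ![0,3,2,1] ![0,3,2,1] (by decide) (by decide)
def p4132 : Equiv.Perm (Fin 4) := mk4 ![3,0,2,1] ![1,3,2,0] (by decide) (by decide)
def p2431 : Equiv.Perm (Fin 4) := mk4 ![1,3,2,0] ![3,0,2,1] (by decide) (by decide)
def p4231 : Equiv.Perm (Fin 4) := mk4 ![3,1,2,0] ![3,1,2,0] (by decide) (by decide)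

/-! An embedding of a two-vote configuration into a two-vote election either keeps or swaps
the two votes. Measuring every candidate by its rank in the first vote, an embedding of
`(T₁, T₂)` into `(V₁, V₂)` is the same thing as an occurrence of the pattern `T₂ T₁⁻¹` in
`V₂ V₁⁻¹`, and swapping the votes replaces the pattern by its inverse `T₁ T₂⁻¹`. The four
configurations give the patterns 1432, 4132, 2431, 4231 and their inverses 1432, 2431, 4132,
4231: the same set. -/

open Equiv Function

def EmbedsPair {m k : ℕ} (W₁ W₂ : Perm (Fin m)) (T₁ T₂ : Perm (Fin k)) : Prop :=
  ∃ g : Fin k → Fin m, Injective g ∧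
    (∀ x y, T₁ x < T₁ y → W₁ (g x) < W₁ (g y)) ∧
    (∀ x y, T₂ x < T₂ y → W₂ (g x) < W₂ (g y))

theorem embedsPair_comm {m k : ℕ} {W₁ W₂ : Perm (Fin m)} {T₁ T₂ : Perm (Fin k)} :
    EmbedsPair W₁ W₂ T₁ T₂ ↔ EmbedsPair W₂ W₁ T₂ T₁ := by
  simp only [EmbedsPair, and_comm]

theorem embedsPair_iff_patternContains {m k : ℕ} (W₁ W₂ : Perm (Fin m)) (T₁ T₂ : Perm (Fin k)) :
    EmbedsPair W₁ W₂ T₁ T₂ ↔ PatternContains (W₂ * W₁⁻¹) (T₂ * T₁⁻¹) := by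
  constructor
  · rintro ⟨g, -, h₁, h₂⟩
    refine ⟨fun j ↦ W₂ (g (T₂⁻¹ j)), fun j ↦ W₁ (g (T₁⁻¹ j)), fun i j hij ↦ h₂ _ _ ?_,
      fun i j hij ↦ h₁ _ _ ?_, fun j ↦ ?_⟩
    · simpa using hij
    · simpa using hij
    · simp
  · rintro ⟨μ, ρ, hμ, hρ, hτ⟩
    -- place candidate `x` at `W₁`-rank `ρ (T₁ x)`; then its `W₂`-rank is `μ (T₂ x)`
    have hW₂ : ∀ x, W₂ (W₁⁻¹ (ρ (T₁ x))) = μ (T₂ x) := fun x ↦ by simpa using hτ (T₁ x)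
    refine ⟨fun x ↦ W₁⁻¹ (ρ (T₁ x)), ?_, fun x y hxy ↦ ?_, fun x y hxy ↦ ?_⟩
    · exact W₁⁻¹.injective.comp (hρ.injective.comp T₁.injective)
    · simpa using hρ hxy
    · simpa only [hW₂] using hμ hxy

theorem electionContains_pair_iff_embedsPair {m k : ℕ} (V₁ V₂ : Perm (Fin m))
    (T₁ T₂ : Perm (Fin k)) :
    ElectionContains ⟨2, m, ![V₁, V₂]⟩ ⟨2, k, ![T₁, T₂]⟩ ↔
      EmbedsPair V₁ V₂ T₁ T₂ ∨ EmbedsPair V₂ V₁ T₁ T₂ := by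
  dsimp only [ElectionContains]
  constructor
  · rintro ⟨f, g, hf, hg, h⟩
    have hne : f 0 ≠ f 1 := hf.ne (by decide)
    obtain ⟨e₀, e₁⟩ | ⟨e₀, e₁⟩ : f 0 = 0 ∧ f 1 = 1 ∨ f 0 = 1 ∧ f 1 = 0 := by omega
    · exact .inl ⟨g, hg, by simpa [e₀] using h 0, by simpa [e₁] using h 1⟩
    · exact .inr ⟨g, hg, by simpa [e₀] using h 0, by simpa [e₁] using h 1⟩
  · rintro (⟨g, hg, h₁, h₂⟩ | ⟨g, hg, h₁, h₂⟩)
    · exact ⟨id, g, injective_id, hg, Fin.forall_fin_two.2 ⟨h₁, h₂⟩⟩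
    · exact ⟨Fin.rev, g, Fin.rev_injective, hg, Fin.forall_fin_two.2 ⟨h₁, h₂⟩⟩

theorem electionContains_pair_iff_patternContains {m k : ℕ} (V₁ V₂ : Perm (Fin m))
    (T₁ T₂ : Perm (Fin k)) :
    ElectionContains ⟨2, m, ![V₁, V₂]⟩ ⟨2, k, ![T₁, T₂]⟩ ↔
      PatternContains (V₂ * V₁⁻¹) (T₂ * T₁⁻¹) ∨ PatternContains (V₂ * V₁⁻¹) (T₁ * T₂⁻¹) := by
  rw [electionContains_pair_iff_embedsPair, embedsPair_comm (W₁ := V₂),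
    embedsPair_iff_patternContains, embedsPair_iff_patternContains]

/-- A two-vote election `(V₁,V₂)` avoids the four `(2,4)`-configurations
`(dabc,dcba)`, `(adbc,dcba)`, `(dabc,cdba)`, `(adbc,cdba)` iff the permutation
`p(V₁,V₂) = V₂ ∘ V₁⁻¹` avoids the patterns 1432, 4132, 2431 and 4231. -/
theorem avoids_sp_configs_iff_avoids_patterns (m : ℕ) (V₁ V₂ : Equiv.Perm (Fin m)) :
    (¬ ElectionContains ⟨2, m, ![V₁, V₂]⟩ ⟨2, 4, ![Tdabc, Tdcba]⟩ ∧
     ¬ ElectionContains ⟨2, m, ![V₁, V₂]⟩ ⟨2, 4, ![Tadbc, Tdcba]⟩ ∧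
     ¬ ElectionContains ⟨2, m, ![V₁, V₂]⟩ ⟨2, 4, ![Tdabc, Tcdba]⟩ ∧
     ¬ ElectionContains ⟨2, m, ![V₁, V₂]⟩ ⟨2, 4, ![Tadbc, Tcdba]⟩) ↔
    (¬ PatternContains (V₂ * V₁⁻¹) p1432 ∧
     ¬ PatternContains (V₂ * V₁⁻¹) p4132 ∧
     ¬ PatternContains (V₂ * V₁⁻¹) p2431 ∧
     ¬ PatternContains (V₂ * V₁⁻¹) p4231) := by
  simp only [electionContains_pair_iff_patternContains]
  rw [show Tdcba * Tdabc⁻¹ = p1432 by decide, show Tdabc * Tdcba⁻¹ = p1432 by decide,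
    show Tdcba * Tadbc⁻¹ = p4132 by decide, show Tadbc * Tdcba⁻¹ = p2431 by decide,
    show Tcdba * Tdabc⁻¹ = p2431 by decide, show Tdabc * Tcdba⁻¹ = p4132 by decide,
    show Tcdba * Tadbc⁻¹ = p4231 by decide, show Tadbc * Tcdba⁻¹ = p4231 by decide]
  tauto
end

section
/- For every permutation pattern π of length k there exists a constant c_k such that the number of (n,m)-elections avoiding any fixed set of configurations Γ containing at least one (2,k)-configuration is at most m! · c_k^{(n-1)m}. More precisely, a(n,m,Γ) ≤ m! · S_m(π)^{n-1} where π is the permutation associated to the (2,k)-configuration, and S_m(π) ≤ c_k^m by the Marcus–Tardos theorem. -/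
/-- `S_m(π)`: the number of `m`-permutations avoiding the pattern `π`. -/
noncomputable def Sm (m : ℕ) {k : ℕ} (π : Equiv.Perm (Fin k)) : ℕ :=
  {σ : Equiv.Perm (Fin m) | ¬ PatternContains σ π}.ncard

/-!
Fix the first vote `P 0` of an election avoiding `Γ`. For every other voter `j` the
permutation `P j * (P 0)⁻¹` avoids `π`, for an occurrence of `π` in it is an occurrence of the
configuration `(T₁, T₂)` on the voters `0` and `j`; this gives `m! · S_m(π)^(n-1)`.

For `S_m(π) ≤ c^m` we follow Klazar and Marcus–Tardos, encoding a 0-1 matrix as the finite set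
of positions of its ones. Marcus–Tardos: a `π`-avoiding matrix of size `n = (k²)^t` has
`O(n)` ones. Cut it into `k² × k²` blocks; the matrix of nonempty blocks avoids `π` too, blocks
meeting fewer than `k` rows and fewer than `k` columns have at most `(k-1)²` ones, and in each
row or column of blocks only `(k-1)·C(k², k)` blocks can meet `k` columns (resp. rows) by
pigeonhole. Klazar: contracting by `k²` maps the avoiders of size `k² n` onto those of size `n`,
and an avoider with `O(n)` ones has at most `2^(k⁴ · O(n))` preimages, so there are `2^O(n)`
avoiders of size `n`; permutation matrices are among them.
-/

open Finset

def ContainsPattern {k : ℕ} (π : Equiv.Perm (Fin k)) (M : Finset (ℕ × ℕ)) : Prop :=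
  ∃ r c : Fin k → ℕ, StrictMono r ∧ StrictMono c ∧ ∀ i, (r i, c (π i)) ∈ M

def cellOf (d : ℕ) (p : ℕ × ℕ) : ℕ × ℕ := (p.1 / d, p.2 / d)

def contract (d : ℕ) (M : Finset (ℕ × ℕ)) : Finset (ℕ × ℕ) := M.image (cellOf d)

def block (M : Finset (ℕ × ℕ)) (d : ℕ) (q : ℕ × ℕ) : Finset (ℕ × ℕ) :=
  M.filter (cellOf d · = q)

section MarcusTardos

variable {k d : ℕ} {π : Equiv.Perm (Fin k)} {M : Finset (ℕ × ℕ)}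

theorem ContainsPattern.of_contract (h : ContainsPattern π (contract d M)) :
    ContainsPattern π M := by
  obtain ⟨r, c, hr, hc, hm⟩ := h
  have hlift : ∀ i, ∃ p ∈ M, cellOf d p = (r i, c (π i)) := fun i => mem_image.mp (hm i)
  choose p hpM hp using hlift
  have hp₁ i : (p i).1 / d = r i := congrArg Prod.fst (hp i)
  have hp₂ i : (p i).2 / d = c (π i) := congrArg Prod.snd (hp i)
  refine ⟨fun i => (p i).1, fun j => (p (π⁻¹ j)).2, fun i j hij => ?_, fun i j hij => ?_,
    fun i => ?_⟩
  · exact Nat.lt_of_div_lt_div (by rw [hp₁, hp₁]; exact hr hij)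
  · apply Nat.lt_of_div_lt_div (c := d)
    simpa only [hp₂, Equiv.Perm.coe_inv, Equiv.apply_symm_apply] using hc hij
  · simpa only [Equiv.Perm.coe_inv, Equiv.symm_apply_apply] using hpM i

theorem contract_subset_range {s : ℕ} (h : M ⊆ range (d * s) ×ˢ range (d * s)) :
    contract d M ⊆ range s ×ˢ range s := by
  intro q hq
  obtain ⟨p, hp, rfl⟩ := mem_image.mp hq
  have hp' := h hp
  simp only [mem_product, mem_range] at hp' ⊢
  exact ⟨Nat.div_lt_of_lt_mul hp'.1, Nat.div_lt_of_lt_mul hp'.2⟩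

theorem card_eq_sum_card_block (M : Finset (ℕ × ℕ)) (d : ℕ) :
    #M = ∑ q ∈ contract d M, #(block M d q) :=
  card_eq_sum_card_fiberwise fun _ hp => mem_image_of_mem _ hp

theorem card_block_le_mul (M : Finset (ℕ × ℕ)) (d : ℕ) (q : ℕ × ℕ) :
    #(block M d q) ≤
      #((block M d q).image Prod.fst) * #((block M d q).image Prod.snd) :=
  (card_le_card subset_product).trans (card_product _ _).le

theorem image_fst_block_subset (hd : 0 < d) (M : Finset (ℕ × ℕ)) (q : ℕ × ℕ) :
    (block M d q).image Prod.fst ⊆ Ico (q.1 * d) (q.1 * d + d) := fun x hx => by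
  obtain ⟨p, hp, rfl⟩ := mem_image.mp hx
  have h := (Nat.div_eq_iff hd).mp (congrArg Prod.fst (mem_filter.mp hp).2)
  rw [mem_Ico]
  omega

theorem image_snd_block_subset (hd : 0 < d) (M : Finset (ℕ × ℕ)) (q : ℕ × ℕ) :
    (block M d q).image Prod.snd ⊆ Ico (q.2 * d) (q.2 * d + d) := fun y hy => by
  obtain ⟨p, hp, rfl⟩ := mem_image.mp hy
  have h := (Nat.div_eq_iff hd).mp (congrArg Prod.snd (mem_filter.mp hp).2)
  rw [mem_Ico]
  omega

theorem card_image_fst_block_le (hd : 0 < d) (M : Finset (ℕ × ℕ)) (q : ℕ × ℕ) :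
    #((block M d q).image Prod.fst) ≤ d := by
  simpa using card_le_card (image_fst_block_subset hd M q)

theorem card_image_snd_block_le (hd : 0 < d) (M : Finset (ℕ × ℕ)) (q : ℕ × ℕ) :
    #((block M d q).image Prod.snd) ≤ d := by
  simpa using card_le_card (image_snd_block_subset hd M q)

theorem card_le_sq_mul_card_contract (hd : 0 < d) (M : Finset (ℕ × ℕ)) :
    #M ≤ d ^ 2 * #(contract d M) := by
  rw [card_eq_sum_card_block M d, mul_comm, ← smul_eq_mul, ← sum_const]
  refine sum_le_sum fun q _ => (card_block_le_mul M d q).trans ?_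
  rw [sq]
  exact Nat.mul_le_mul (card_image_fst_block_le hd M q) (card_image_snd_block_le hd M q)

theorem ContainsPattern.of_grid {a c : Fin k → ℕ} (ha : StrictMono a) (hc : StrictMono c)
    (h : ∀ i j, ∃ x, x / d = a i ∧ (x, c j) ∈ M) : ContainsPattern π M := by
  choose x hx hxM using h
  exact ⟨fun i => x i (π i), c,
    fun i j hij => Nat.lt_of_div_lt_div (c := d) (by rw [hx, hx]; exact ha hij), hc,
    fun i => hxM i (π i)⟩

/-- In a fixed column of blocks, a block meeting at least `k` columns is *wide*. If `k`
wide blocks meet the same `k` columns, they carry a `k × k` grid of points, which contains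
every pattern; pigeonholing on these `k`-sets of columns bounds the number of wide blocks. -/
theorem card_filter_wide_block_le (hd : 0 < d) (hM : ¬ ContainsPattern π M)
    (R : Finset ℕ) (b : ℕ) :
    #{a ∈ R | k ≤ #((block M d (a, b)).image Prod.snd)} ≤ (k - 1) * d.choose k := by
  set W := {a ∈ R | k ≤ #((block M d (a, b)).image Prod.snd)}
  by_contra! hW
  have hcols : ∀ a, ∃ S : Finset ℕ, a ∈ W →
      S ⊆ (block M d (a, b)).image Prod.snd ∧ #S = k := fun a => by
    by_cases ha : a ∈ W
    · obtain ⟨S, hS, hSk⟩ := exists_subset_card_eq (mem_filter.mp ha).2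
      exact ⟨S, fun _ => ⟨hS, hSk⟩⟩
    · exact ⟨∅, fun h => absurd h ha⟩
  choose S hS using hcols
  have hmaps : ∀ a ∈ W, S a ∈ (Ico (b * d) (b * d + d)).powersetCard k := fun a ha =>
    mem_powersetCard.mpr ⟨(hS a ha).1.trans (image_snd_block_subset hd M (a, b)), (hS a ha).2⟩
  have hcard : #((Ico (b * d) (b * d + d)).powersetCard k) * (k - 1) < #W := by
    simpa [mul_comm] using hW
  obtain ⟨T, hT, hfiber⟩ := exists_lt_card_fiber_of_mul_lt_card_of_maps_to hmaps hcard
  have hTk : #T = k := (mem_powersetCard.mp hT).2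
  obtain ⟨A, hA, hAk⟩ := exists_subset_card_eq (show k ≤ #{a ∈ W | S a = T} by omega)
  refine hM (ContainsPattern.of_grid (d := d) (A.orderEmbOfFin hAk).strictMono
    (T.orderEmbOfFin hTk).strictMono fun i j => ?_)
  obtain ⟨haW, haT⟩ := mem_filter.mp (hA (A.orderEmbOfFin_mem hAk i))
  have hj : T.orderEmbOfFin hTk j ∈ S (A.orderEmbOfFin hAk i) := by
    rw [haT]
    exact T.orderEmbOfFin_mem hTk j
  obtain ⟨p, hp, hpc⟩ := mem_image.mp ((hS _ haW).1 hj)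
  obtain ⟨hpM, hpq⟩ := mem_filter.mp hp
  exact ⟨p.1, congrArg Prod.fst hpq, by rw [← hpc]; exact hpM⟩

theorem ContainsPattern.of_image_swap (h : ContainsPattern π⁻¹ (M.image Prod.swap)) :
    ContainsPattern π M := by
  obtain ⟨r, c, hr, hc, hm⟩ := h
  refine ⟨c, r, hc, hr, fun i => ?_⟩
  simpa using hm (π i)

theorem block_image_swap (M : Finset (ℕ × ℕ)) (d : ℕ) (q : ℕ × ℕ) :
    block (M.image Prod.swap) d q = (block M d q.swap).image Prod.swap := by
  simp only [block, filter_image]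
  congr 1
  ext p
  simp [cellOf, Prod.ext_iff, and_comm]

theorem card_filter_tall_block_le (hd : 0 < d) (hM : ¬ ContainsPattern π M)
    (R : Finset ℕ) (a : ℕ) :
    #{b ∈ R | k ≤ #((block M d (a, b)).image Prod.fst)} ≤ (k - 1) * d.choose k := by
  have hM' : ¬ ContainsPattern π⁻¹ (M.image Prod.swap) := fun h => hM h.of_image_swap
  simpa [block_image_swap, image_image, Function.comp_def] using
    card_filter_wide_block_le hd hM' R a

theorem card_block_le (hd : 0 < d) (M : Finset (ℕ × ℕ)) (q : ℕ × ℕ) :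
    #(block M d q) ≤ (k - 1) ^ 2 +
      ((if k ≤ #((block M d q).image Prod.snd) then d ^ 2 else 0) +
        (if k ≤ #((block M d q).image Prod.fst) then d ^ 2 else 0)) := by
  have h := card_block_le_mul M d q
  have hr := card_image_fst_block_le hd M q
  have hc := card_image_snd_block_le hd M q
  by_cases hbig : k ≤ #((block M d q).image Prod.snd) ∨ k ≤ #((block M d q).image Prod.fst)
  · have : #(block M d q) ≤ d ^ 2 := h.trans (sq d ▸ Nat.mul_le_mul hr hc)
    split_ifs <;> omega
  · simp only [not_or, not_le] at hbig
    rw [if_neg hbig.1.not_ge, if_neg hbig.2.not_ge, sq]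
    exact h.trans (Nat.mul_le_mul (by omega) (by omega)) |>.trans (Nat.le_add_right _ _)

theorem card_le_of_block_shapes (hd : 0 < d) (M : Finset (ℕ × ℕ)) :
    #M ≤ (k - 1) ^ 2 * #(contract d M) +
      d ^ 2 * (#{q ∈ contract d M | k ≤ #((block M d q).image Prod.snd)} +
        #{q ∈ contract d M | k ≤ #((block M d q).image Prod.fst)}) := by
  rw [card_eq_sum_card_block M d]
  refine (sum_le_sum fun q _ => card_block_le (k := k) hd M q).trans_eq ?_
  rw [sum_add_distrib, sum_add_distrib, ← sum_filter, ← sum_filter]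
  simp only [sum_const, smul_eq_mul]
  ring

theorem card_wide_blocks_le (hd : 0 < d) (hM : ¬ ContainsPattern π M) (s : ℕ) :
    #{q ∈ range s ×ˢ range s | k ≤ #((block M d q).image Prod.snd)} ≤
      s * ((k - 1) * d.choose k) := by
  rw [card_filter, sum_product_right]
  calc _ = ∑ b ∈ range s, #{a ∈ range s | k ≤ #((block M d (a, b)).image Prod.snd)} :=
        by simp only [card_filter]
    _ ≤ ∑ _b ∈ range s, (k - 1) * d.choose k :=
        sum_le_sum fun b _ => card_filter_wide_block_le hd hM _ b
    _ = _ := by simp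

theorem card_tall_blocks_le (hd : 0 < d) (hM : ¬ ContainsPattern π M) (s : ℕ) :
    #{q ∈ range s ×ˢ range s | k ≤ #((block M d q).image Prod.fst)} ≤
      s * ((k - 1) * d.choose k) := by
  rw [card_filter, sum_product]
  calc _ = ∑ a ∈ range s, #{b ∈ range s | k ≤ #((block M d (a, b)).image Prod.fst)} :=
        by simp only [card_filter]
    _ ≤ ∑ _a ∈ range s, (k - 1) * d.choose k :=
        sum_le_sum fun a _ => card_filter_tall_block_le hd hM _ a
    _ = _ := by simp

def marcusTardosConst (k : ℕ) : ℕ := 2 * (k ^ 2) ^ 2 * (k ^ 2).choose k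

theorem marcusTardosConst_pos (hk : 1 ≤ k) : 0 < marcusTardosConst k :=
  Nat.mul_pos (by positivity) (Nat.choose_pos (by nlinarith))

/-- The recurrence `f(k² s) ≤ (k-1)² f(s) + 2 k⁴ (k-1) C(k², k) s` of Marcus and Tardos
is solved by `f(n) = marcusTardosConst k * n`, since `(k-1)² + (k-1) ≤ k²`. -/
theorem marcusTardosConst_recurrence (hk : 1 ≤ k) (s : ℕ) :
    (k - 1) ^ 2 * (marcusTardosConst k * s) +
        (k ^ 2) ^ 2 * (s * ((k - 1) * (k ^ 2).choose k) + s * ((k - 1) * (k ^ 2).choose k)) ≤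
      marcusTardosConst k * (k ^ 2 * s) := by
  obtain ⟨j, rfl⟩ : ∃ j, k = j + 1 := ⟨k - 1, by omega⟩
  have hj : j ^ 2 + j ≤ (j + 1) ^ 2 := by nlinarith
  simp only [Nat.add_sub_cancel, marcusTardosConst]
  calc _ = 2 * ((j + 1) ^ 2) ^ 2 * ((j + 1) ^ 2).choose (j + 1) * s * (j ^ 2 + j) := by ring
    _ ≤ 2 * ((j + 1) ^ 2) ^ 2 * ((j + 1) ^ 2).choose (j + 1) * s * (j + 1) ^ 2 := by gcongr
    _ = _ := by ring

theorem card_le_of_not_containsPattern (hk : 1 ≤ k) (t : ℕ)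
    (hM : M ⊆ range ((k ^ 2) ^ t) ×ˢ range ((k ^ 2) ^ t)) (hav : ¬ ContainsPattern π M) :
    #M ≤ marcusTardosConst k * (k ^ 2) ^ t := by
  induction t generalizing M with
  | zero =>
    calc #M ≤ #(range 1 ×ˢ range 1) := card_le_card (by simpa using hM)
      _ = 1 := by simp
      _ ≤ _ := by simpa using Nat.one_le_iff_ne_zero.mpr (marcusTardosConst_pos hk).ne'
  | succ t ih =>
    have hd : 0 < k ^ 2 := by positivity
    have hB : contract (k ^ 2) M ⊆ range ((k ^ 2) ^ t) ×ˢ range ((k ^ 2) ^ t) :=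
      contract_subset_range (by rwa [← pow_succ'])
    have hBcard := ih hB fun h => hav h.of_contract
    have hwide := (card_le_card (filter_subset_filter _ hB)).trans
      (card_wide_blocks_le hd hav ((k ^ 2) ^ t))
    have htall := (card_le_card (filter_subset_filter _ hB)).trans
      (card_tall_blocks_le hd hav ((k ^ 2) ^ t))
    calc #M ≤ _ := card_le_of_block_shapes (k := k) hd M
      _ ≤ _ := by gcongr
      _ ≤ _ := marcusTardosConst_recurrence hk _
      _ = _ := by rw [← pow_succ']

end MarcusTardos

section StanleyWilf

variable {k : ℕ} {π : Equiv.Perm (Fin k)}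

noncomputable def avoiders (π : Equiv.Perm (Fin k)) (n : ℕ) : Finset (Finset (ℕ × ℕ)) := by
  classical
  exact (range n ×ˢ range n).powerset.filter (¬ ContainsPattern π ·)

theorem mem_avoiders {n : ℕ} {M : Finset (ℕ × ℕ)} :
    M ∈ avoiders π n ↔ M ⊆ range n ×ˢ range n ∧ ¬ ContainsPattern π M := by
  simp [avoiders]

theorem avoiders_mono {n n' : ℕ} (h : n ≤ n') : avoiders π n ⊆ avoiders π n' :=
    fun M hM => by
  rw [mem_avoiders] at hM ⊢
  exact ⟨hM.1.trans (product_subset_product (range_mono h) (range_mono h)), hM.2⟩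

theorem card_avoiders_le (n : ℕ) : #(avoiders π n) ≤ 2 ^ (n * n) := by
  calc #(avoiders π n) ≤ #(range n ×ˢ range n).powerset :=
        card_le_card fun M hM => mem_powerset.mpr (mem_avoiders.mp hM).1
    _ = 2 ^ (n * n) := by simp

/-- Klazar's reduction: contracting by `d` maps avoiders of size `d n` onto avoiders of size `n`,
and an avoider `B` has at most `2 ^ (d² #B)` preimages, all lying in the cells of `B`. -/
theorem card_avoiders_mul_le {d n L : ℕ} (hd : 0 < d) (hL : ∀ B ∈ avoiders π n, #B ≤ L) :
    #(avoiders π (d * n)) ≤ #(avoiders π n) * 2 ^ (d ^ 2 * L) := by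
  have hmaps : ∀ M ∈ avoiders π (d * n), contract d M ∈ avoiders π n := fun M hM => by
    rw [mem_avoiders] at hM ⊢
    exact ⟨contract_subset_range hM.1, fun h => hM.2 h.of_contract⟩
  rw [card_eq_sum_card_fiberwise hmaps]
  calc _ ≤ ∑ _B ∈ avoiders π n, 2 ^ (d ^ 2 * L) := sum_le_sum fun B hB => ?_
    _ = _ := by rw [sum_const, smul_eq_mul]
  set U := {p ∈ range (d * n) ×ˢ range (d * n) | cellOf d p ∈ B}
  have hfiber : {M ∈ avoiders π (d * n) | contract d M = B} ⊆ U.powerset := fun M hM => by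
    obtain ⟨hM, hMB⟩ := mem_filter.mp hM
    refine mem_powerset.mpr fun p hp => mem_filter.mpr ⟨(mem_avoiders.mp hM).1 hp, ?_⟩
    rw [← hMB]
    exact mem_image_of_mem (cellOf d) hp
  have hU : #U ≤ d ^ 2 * L := calc
    #U ≤ d ^ 2 * #(contract d U) := card_le_sq_mul_card_contract hd U
    _ ≤ d ^ 2 * #B := by
      gcongr
      intro q hq
      obtain ⟨p, hp, rfl⟩ := mem_image.mp hq
      exact (mem_filter.mp hp).2
    _ ≤ d ^ 2 * L := by gcongr; exact hL B hB
  calc _ ≤ #U.powerset := card_le_card hfiber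
    _ = 2 ^ #U := card_powerset U
    _ ≤ 2 ^ (d ^ 2 * L) := Nat.pow_le_pow_right two_pos hU

def stanleyWilfExponent (k : ℕ) : ℕ := (k ^ 2) ^ 2 * marcusTardosConst k

theorem card_avoiders_pow_le (hk : 2 ≤ k) (t : ℕ) :
    #(avoiders π ((k ^ 2) ^ t)) ≤ 2 ^ (stanleyWilfExponent k * (k ^ 2) ^ t) := by
  have hK : 0 < stanleyWilfExponent k :=
    Nat.mul_pos (by positivity) (marcusTardosConst_pos (by omega))
  induction t with
  | zero => simpa using (card_avoiders_le 1).trans (Nat.pow_le_pow_right two_pos hK)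
  | succ t ih =>
    have hstep := card_avoiders_mul_le (π := π) (d := k ^ 2) (by positivity) fun B hB =>
      card_le_of_not_containsPattern (by omega) t (mem_avoiders.mp hB).1 (mem_avoiders.mp hB).2
    have hk2 : 2 ≤ k ^ 2 := by nlinarith
    have hK' : (k ^ 2) ^ 2 * (marcusTardosConst k * (k ^ 2) ^ t) =
        stanleyWilfExponent k * (k ^ 2) ^ t := by
      rw [stanleyWilfExponent, mul_assoc]
    rw [hK', ← pow_succ'] at hstep
    calc _ ≤ _ := hstep
      _ ≤ 2 ^ (stanleyWilfExponent k * (k ^ 2) ^ t) *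
          2 ^ (stanleyWilfExponent k * (k ^ 2) ^ t) := Nat.mul_le_mul_right _ ih
      _ = 2 ^ (stanleyWilfExponent k * (2 * (k ^ 2) ^ t)) := by ring
      _ ≤ 2 ^ (stanleyWilfExponent k * (k ^ 2) ^ (t + 1)) := by
        rw [pow_succ' (k ^ 2) t]
        gcongr
        norm_num

end StanleyWilf

section Permutations

variable {k m : ℕ} {π : Equiv.Perm (Fin k)}

def permGraph (σ : Equiv.Perm (Fin m)) : Finset (ℕ × ℕ) :=
  univ.image fun i : Fin m => ((i : ℕ), (σ i : ℕ))

theorem mem_permGraph {σ : Equiv.Perm (Fin m)} {p : ℕ × ℕ} :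
    p ∈ permGraph σ ↔ ∃ i : Fin m, ((i : ℕ), (σ i : ℕ)) = p := by
  simp [permGraph]

theorem permGraph_injective : Function.Injective (permGraph (m := m)) := by
  intro σ τ h
  ext i
  have hi : ((i : ℕ), (σ i : ℕ)) ∈ permGraph τ := h ▸ mem_permGraph.mpr ⟨i, rfl⟩
  obtain ⟨j, hj⟩ := mem_permGraph.mp hi
  obtain ⟨hji, hτσ⟩ := Prod.ext_iff.mp hj
  rw [Fin.ext hji] at hτσ
  exact hτσ.symm

theorem PatternContains.of_containsPattern_permGraph {σ : Equiv.Perm (Fin m)}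
    (h : ContainsPattern π (permGraph σ)) : PatternContains σ π := by
  obtain ⟨r, c, hr, hc, hm⟩ := h
  have hpt : ∀ i, ∃ j : Fin m, (j : ℕ) = r i ∧ (σ j : ℕ) = c (π i) := fun i => by
    obtain ⟨j, hj⟩ := mem_permGraph.mp (hm i)
    exact ⟨j, congrArg Prod.fst hj, congrArg Prod.snd hj⟩
  choose j hj₁ hj₂ using hpt
  have hμ l : (σ (j (π⁻¹ l)) : ℕ) = c l := by simp [hj₂]
  refine ⟨fun l => σ (j (π⁻¹ l)), j, fun l l' hl => ?_, fun i i' hi => ?_,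
    fun i => by simp⟩
  · rw [Fin.lt_def, hμ, hμ]
    exact hc hl
  · rw [Fin.lt_def, hj₁, hj₁]
    exact hr hi

theorem Sm_le_card_avoiders (m : ℕ) (π : Equiv.Perm (Fin k)) : Sm m π ≤ #(avoiders π m) := by
  rw [Sm, ← Set.ncard_coe_finset]
  refine Set.ncard_le_ncard_of_injOn permGraph (fun σ hσ => mem_avoiders.mpr ⟨?_, ?_⟩)
    permGraph_injective.injOn
  · intro p hp
    obtain ⟨i, rfl⟩ := mem_permGraph.mp hp
    simp
  · exact fun h => hσ (PatternContains.of_containsPattern_permGraph h)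

def stanleyWilfConst (k : ℕ) : ℕ := 2 ^ (stanleyWilfExponent k * k ^ 2)

theorem Sm_le_stanleyWilfConst_pow (hk : 2 ≤ k) (π : Equiv.Perm (Fin k)) (m : ℕ) :
    Sm m π ≤ stanleyWilfConst k ^ m := by
  refine (Sm_le_card_avoiders m π).trans ?_
  rcases Nat.eq_zero_or_pos m with rfl | hm
  · simpa using card_avoiders_le (π := π) 0
  set t := Nat.log (k ^ 2) m + 1
  have hmt : m ≤ (k ^ 2) ^ t := (Nat.lt_pow_succ_log_self (by nlinarith) m).le
  have htm : (k ^ 2) ^ t ≤ k ^ 2 * m := by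
    rw [pow_succ']
    exact Nat.mul_le_mul_left _ (Nat.pow_log_le_self _ hm.ne')
  calc #(avoiders π m) ≤ #(avoiders π ((k ^ 2) ^ t)) := card_le_card (avoiders_mono hmt)
    _ ≤ 2 ^ (stanleyWilfExponent k * (k ^ 2) ^ t) := card_avoiders_pow_le hk t
    _ ≤ 2 ^ (stanleyWilfExponent k * (k ^ 2 * m)) := by gcongr; norm_num
    _ = stanleyWilfConst k ^ m := by rw [stanleyWilfConst, ← pow_mul, mul_assoc]

end Permutations

section Elections

variable {k : ℕ} {π T₁ T₂ : Equiv.Perm (Fin k)}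

/-- The candidates are `x ↦ (P a)⁻¹ (ρ (T₁ x))`, where `ρ` locates the occurrence of `π`. -/
theorem electionContains_of_patternContains {n m : ℕ} {P : Fin n → Equiv.Perm (Fin m)}
    {a b : Fin n} (hab : a ≠ b) (hπ : T₂ * T₁⁻¹ = π)
    (h : PatternContains (P b * (P a)⁻¹) π) :
    ElectionContains ⟨n, m, P⟩ ⟨2, k, ![T₁, T₂]⟩ := by
  obtain ⟨μ, ρ, hμ, hρ, hcomm⟩ := h
  have hb x : P b ((P a)⁻¹ (ρ (T₁ x))) = μ (T₂ x) := by
    simpa [← hπ] using hcomm (T₁ x)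
  refine ⟨![a, b], fun x => (P a)⁻¹ (ρ (T₁ x)), ?_,
    fun x y hxy => T₁.injective (hρ.injective ((P a)⁻¹.injective hxy)), ?_⟩
  · intro i j hij
    fin_cases i <;> fin_cases j <;> simp_all [eq_comm]
  · intro v x y hxy
    fin_cases v
    · show P a ((P a)⁻¹ _) < P a ((P a)⁻¹ _)
      simpa using hρ hxy
    · show P b _ < P b _
      rw [hb, hb]
      exact hμ hxy

theorem ncard_avoiding_le {n m : ℕ} {Γ : Set Election} (hπ : T₂ * T₁⁻¹ = π)
    (hΓ : (⟨2, k, ![T₁, T₂]⟩ : Election) ∈ Γ) :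
    {P : Fin n → Equiv.Perm (Fin m) |
        ∀ γ ∈ Γ, ¬ ElectionContains ⟨n, m, P⟩ γ}.ncard ≤ m.factorial * Sm m π ^ (n - 1) := by
  rcases n with _ | n
  · refine (Set.ncard_le_one_of_subsingleton _).trans ?_
    simpa using Nat.succ_le_of_lt m.factorial_pos
  set S :=
    {P : Fin (n + 1) → Equiv.Perm (Fin m) | ∀ γ ∈ Γ, ¬ ElectionContains ⟨n + 1, m, P⟩ γ}
  have havoid : ∀ P ∈ S, ∀ i : Fin n, ¬ PatternContains (P i.succ * (P 0)⁻¹) π :=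
    fun P hP i h => hP _ hΓ (electionContains_of_patternContains (Fin.succ_ne_zero i).symm hπ h)
  let A := {σ : Equiv.Perm (Fin m) | ¬ PatternContains σ π}
  let Φ : S → Equiv.Perm (Fin m) × (Fin n → A) := fun P =>
    (P.1 0, fun i => ⟨P.1 i.succ * (P.1 0)⁻¹, havoid P.1 P.2 i⟩)
  have hΦ : Function.Injective Φ := by
    intro P Q h
    simp only [Φ, Prod.mk.injEq, funext_iff, Subtype.mk.injEq] at h
    obtain ⟨h0, hsucc⟩ := h
    ext1
    funext j
    refine Fin.cases h0 (fun i => ?_) j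
    simpa [h0] using hsucc i
  calc S.ncard = Nat.card S := (Nat.card_coe_set_eq S).symm
    _ ≤ Nat.card (Equiv.Perm (Fin m) × (Fin n → A)) := Nat.card_le_card_of_injective Φ hΦ
    _ = m.factorial * Sm m π ^ (n + 1 - 1) := by
      simp [Nat.card_prod, Nat.card_fun, Fintype.card_perm, Sm, A, Nat.card_coe_set_eq]

end Elections

/-- For every pattern `π` of length `k ≥ 2` there is a constant `c` (Marcus–Tardos)
such that for every set of configurations `Γ` containing a `(2,k)`-configuration
`(T₁,T₂)` with associated permutation `π = p(T₁,T₂) = T₂ ∘ T₁⁻¹`, the number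
`a(n,m,Γ)` of `(n,m)`-elections avoiding all configurations in `Γ` satisfies
`a(n,m,Γ) ≤ m!·S_m(π)^{n-1}`, with `S_m(π) ≤ c^m`, and hence
`a(n,m,Γ) ≤ m!·c^{(n-1)m}`. -/
theorem avoiding_elections_bound (k : ℕ) (hk : 2 ≤ k) (π : Equiv.Perm (Fin k)) :
    ∃ c : ℕ, ∀ (n m : ℕ) (Γ : Set Election) (T₁ T₂ : Equiv.Perm (Fin k)),
      T₂ * T₁⁻¹ = π → (⟨2, k, ![T₁, T₂]⟩ : Election) ∈ Γ →
      {P : Fin n → Equiv.Perm (Fin m) |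
          ∀ γ ∈ Γ, ¬ ElectionContains ⟨n, m, P⟩ γ}.ncard ≤
        Nat.factorial m * (Sm m π) ^ (n - 1) ∧
      Sm m π ≤ c ^ m ∧
      {P : Fin n → Equiv.Perm (Fin m) |
          ∀ γ ∈ Γ, ¬ ElectionContains ⟨n, m, P⟩ γ}.ncard ≤
        Nat.factorial m * c ^ ((n - 1) * m) := by
  refine ⟨stanleyWilfConst k, fun n m Γ T₁ T₂ hπ hΓ => ?_⟩
  have hcount := ncard_avoiding_le (n := n) (m := m) hπ hΓ
  have hSm := Sm_le_stanleyWilfConst_pow hk π m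
  refine ⟨hcount, hSm, hcount.trans ?_⟩
  rw [mul_comm (n - 1), pow_mul]
  gcongr
end

section
/- The number of single-peaked elections with exactly 2 voters and m candidates (m ≥ 1) equals m! · C(2m−2, m−1). -/
def SPElection {n m : ℕ} (P : Fin n → Equiv.Perm (Fin m)) : Prop :=
  ∃ A : Equiv.Perm (Fin m), ∀ i, SPwrt (P i) A

namespace SPAux

open Equiv Finset

variable {n : ℕ}

/-- Both the identity vote and `σ` are single peaked w.r.t. axis `A`. -/
def Good (σ A : Equiv.Perm (Fin (n+1))) : Prop := SPwrt 1 A ∧ SPwrt σ A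

def SP (σ : Equiv.Perm (Fin (n+1))) : Prop := ∃ A, Good σ A

/-- value of `σ` at the top end of the axis -/
def tv (σ A : Equiv.Perm (Fin (n+1))) : ℕ := (σ (A.symm (Fin.last n)) : ℕ)

/-- value of `σ` at the bottom end of the axis -/
def bv (σ A : Equiv.Perm (Fin (n+1))) : ℕ := (σ (A.symm 0) : ℕ)

def Jset (σ : Equiv.Perm (Fin (n+1))) : Set ℕ := {v | ∃ A, Good σ A ∧ tv σ A = v}

noncomputable def lab (σ : Equiv.Perm (Fin (n+1))) : ℕ := sInf (Jset σ)

/-- insert a new candidate (index `last`) with rank `p` into `σ` -/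
def ins (p : Fin (n+2)) (σ : Equiv.Perm (Fin (n+1))) : Equiv.Perm (Fin (n+2)) :=
  (finSuccEquivLast.trans ((Equiv.optionCongr σ).trans (finSuccEquiv' p).symm))

@[simp] lemma ins_castSucc (p : Fin (n+2)) (σ : Equiv.Perm (Fin (n+1))) (c : Fin (n+1)) :
    ins p σ c.castSucc = p.succAbove (σ c) := by
  simp [ins]

@[simp] lemma ins_last (p : Fin (n+2)) (σ : Equiv.Perm (Fin (n+1))) :
    ins p σ (Fin.last (n+1)) = p := by
  simp [ins]

lemma ins_inj {p q : Fin (n+2)} {σ ρ : Equiv.Perm (Fin (n+1))}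
    (h : ins p σ = ins q ρ) : p = q ∧ σ = ρ := by
  have hp : p = q := by
    have := congrArg (fun f : Equiv.Perm (Fin (n+2)) => f (Fin.last (n+1))) h
    simpa using this
  subst hp
  refine ⟨rfl, ?_⟩
  ext c
  have := congrArg (fun f : Equiv.Perm (Fin (n+2)) => f c.castSucc) h
  simp only [ins_castSucc] at this
  exact congrArg Fin.val (Fin.succAbove_right_injective this)

lemma ins_surj (τ : Equiv.Perm (Fin (n+2))) : ∃ p σ, τ = ins p σ := by
  have hbij : Function.Bijective
      (fun x : Fin (n+2) × Equiv.Perm (Fin (n+1)) => ins x.1 x.2) := by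
    rw [Fintype.bijective_iff_injective_and_card]
    constructor
    · intro x y h
      obtain ⟨h1, h2⟩ := ins_inj h
      exact Prod.ext h1 h2
    · simp [Fintype.card_perm, Nat.factorial_succ]
  obtain ⟨⟨p, σ⟩, h⟩ := hbij.2 τ
  exact ⟨p, σ, h.symm⟩

lemma spwrt_mul_iff (V A W : Equiv.Perm (Fin (n+1))) :
    SPwrt V A ↔ SPwrt (V * W) (A * W) := by
  constructor
  · intro h c₁ c₂ c₃ hc
    exact h (W c₁) (W c₂) (W c₃) hc
  · intro h c₁ c₂ c₃ hc
    have := h (W⁻¹ c₁) (W⁻¹ c₂) (W⁻¹ c₃)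
    simp only [Equiv.Perm.mul_apply, Equiv.Perm.coe_inv, Equiv.apply_symm_apply] at this
    exact this hc

lemma spElection_iff (P : Fin 2 → Equiv.Perm (Fin (n+1))) :
    SPElection P ↔ SP ((P 1) * (P 0)⁻¹) := by
  unfold SPElection SP Good
  constructor
  · rintro ⟨A, hA⟩
    refine ⟨A * (P 0)⁻¹, ?_, ?_⟩
    · have := (spwrt_mul_iff (P 0) A (P 0)⁻¹).1 (hA 0)
      simpa using this
    · exact (spwrt_mul_iff (P 1) A (P 0)⁻¹).1 (hA 1)
  · rintro ⟨B, h1, h2⟩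
    refine ⟨B * (P 0), ?_⟩
    rw [Fin.forall_fin_two]
    constructor
    · have := (spwrt_mul_iff 1 B (P 0)).1 h1
      simpa using this
    · have := (spwrt_mul_iff ((P 1) * (P 0)⁻¹) B (P 0)).1 h2
      simpa [mul_assoc] using this

lemma spwrt_rev {V A : Equiv.Perm (Fin (n+1))} (h : SPwrt V A) :
    SPwrt V (Fin.revPerm * A) := by
  intro c₁ c₂ c₃ hc
  obtain ⟨h1, h2, h3, h4⟩ := hc
  simp only [Equiv.Perm.mul_apply, Fin.revPerm_apply, Fin.rev_lt_rev] at h1 h2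
  exact h c₃ c₂ c₁ ⟨h2, h1, h4, h3⟩

lemma good_rev {σ A : Equiv.Perm (Fin (n+1))} (h : Good σ A) :
    Good σ (Fin.revPerm * A) := ⟨spwrt_rev h.1, spwrt_rev h.2⟩

lemma rev_symm_apply (A : Equiv.Perm (Fin (n+1))) (x : Fin (n+1)) :
    (Fin.revPerm * A).symm x = A.symm x.rev := by
  rw [Equiv.symm_apply_eq]
  simp [Equiv.Perm.mul_apply, Fin.rev_rev]

lemma tv_rev (σ A : Equiv.Perm (Fin (n+1))) : tv σ (Fin.revPerm * A) = bv σ A := by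
  rw [tv, bv, rev_symm_apply, Fin.rev_last]

lemma bv_rev (σ A : Equiv.Perm (Fin (n+1))) : bv σ (Fin.revPerm * A) = tv σ A := by
  rw [tv, bv, rev_symm_apply, Fin.rev_zero]

lemma bv_mem_Jset {σ A : Equiv.Perm (Fin (n+1))} (h : Good σ A) : bv σ A ∈ Jset σ :=
  ⟨Fin.revPerm * A, good_rev h, tv_rev σ A⟩

lemma tv_mem_Jset {σ A : Equiv.Perm (Fin (n+1))} (h : Good σ A) : tv σ A ∈ Jset σ :=
  ⟨A, h, rfl⟩

/-- a candidate ranked worst must be at one of the two ends of the axis -/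
lemma worst_at_end {σ A : Equiv.Perm (Fin (n+1))} (h : SPwrt σ A) {b : Fin (n+1)}
    (hb : σ b = Fin.last n) : A b = 0 ∨ A b = Fin.last n := by
  by_contra hc
  push_neg at hc
  obtain ⟨h0, hl⟩ := hc
  set c₁ := A.symm 0 with hc₁
  set c₃ := A.symm (Fin.last n) with hc₃
  refine h c₁ b c₃ ⟨?_, ?_, ?_, ?_⟩
  · rw [hc₁, Equiv.apply_symm_apply]
    exact Fin.pos_of_ne_zero h0
  · rw [hc₃, Equiv.apply_symm_apply]
    exact Fin.lt_last_iff_ne_last.2 hl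
  · rw [hb]
    refine Fin.lt_last_iff_ne_last.2 fun hh => h0 ?_
    have : c₁ = b := σ.injective (by rw [hh, hb])
    rw [← this, hc₁, Equiv.apply_symm_apply]
  · rw [hb]
    refine Fin.lt_last_iff_ne_last.2 fun hh => hl ?_
    have : c₃ = b := σ.injective (by rw [hh, hb])
    rw [← this, hc₃, Equiv.apply_symm_apply]

lemma succAbove_val (p : Fin (n+2)) (x : Fin (n+1)) :
    ((p.succAbove x) : ℕ) = if (x:ℕ) < (p:ℕ) then (x:ℕ) else (x:ℕ)+1 := by
  rcases lt_or_ge (x.castSucc) p with h | h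
  · rw [Fin.lt_def] at h
    simp only [Fin.coe_castSucc] at h
    rw [Fin.succAbove_of_castSucc_lt _ _ (by rw [Fin.lt_def]; simpa using h), if_pos h]
    exact Fin.coe_castSucc x
  · rw [Fin.le_def] at h
    simp only [Fin.coe_castSucc] at h
    rw [Fin.succAbove_of_le_castSucc _ _ (by rw [Fin.le_def]; simpa using h),
      if_neg (by omega)]
    exact Fin.val_succ x

lemma good_ins_iff (p : Fin (n+2)) (σ A : Equiv.Perm (Fin (n+1))) :
    Good (ins p σ) (ins (Fin.last (n+1)) A) ↔ (Good σ A ∧ tv σ A < max (p:ℕ) 1) := by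
  have haxis : ∀ c : Fin (n+1), ins (Fin.last (n+1)) A c.castSucc = (A c).castSucc := by
    intro c; rw [ins_castSucc, Fin.succAbove_last]
  have haxislast : ins (Fin.last (n+1)) A (Fin.last (n+1)) = Fin.last (n+1) := ins_last _ _
  constructor
  · rintro ⟨g1, g2⟩
    refine ⟨⟨?_, ?_⟩, ?_⟩
    · -- SPwrt 1 A
      intro c₁ c₂ c₃ ⟨h1, h2, h3, h4⟩
      refine g1 c₁.castSucc c₂.castSucc c₃.castSucc ⟨?_, ?_, ?_, ?_⟩ <;>
        simp only [haxis, Fin.castSucc_lt_castSucc_iff, Equiv.Perm.one_apply] <;>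
        assumption
    · -- SPwrt σ A
      intro c₁ c₂ c₃ ⟨h1, h2, h3, h4⟩
      refine g2 c₁.castSucc c₂.castSucc c₃.castSucc ⟨?_, ?_, ?_, ?_⟩ <;>
        simp only [haxis, ins_castSucc, Fin.castSucc_lt_castSucc_iff,
          Fin.succAbove_lt_succAbove_iff] <;> assumption
    · -- tv σ A < max p 1
      by_contra hge
      push_neg at hge
      set e := A.symm (Fin.last n) with he
      have hAe : A e = Fin.last n := A.apply_symm_apply _
      have hσe1 : 1 ≤ (σ e : ℕ) := le_trans (le_max_right _ 1) hge
      have hσep : (p:ℕ) ≤ (σ e : ℕ) := le_trans (le_max_left _ 1) hge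
      set z := σ.symm 0 with hz
      have hσz : σ z = 0 := σ.apply_symm_apply _
      have hze : z ≠ e := by
        intro hh
        rw [hh] at hσz
        rw [hσz] at hσe1
        simp at hσe1
      refine g2 z.castSucc e.castSucc (Fin.last (n+1)) ⟨?_, ?_, ?_, ?_⟩
      · rw [haxis, haxis, Fin.castSucc_lt_castSucc_iff, hAe]
        refine Fin.lt_last_iff_ne_last.2 fun hh => hze (A.injective (by rw [hh, hAe]))
      · rw [haxis, haxislast, hAe]
        exact Fin.castSucc_lt_last _
      · rw [ins_castSucc, ins_castSucc, Fin.succAbove_lt_succAbove_iff, hσz]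
        exact Fin.pos_of_ne_zero fun hh => by rw [hh] at hσe1; simp at hσe1
      · rw [ins_last, ins_castSucc, Fin.lt_def, succAbove_val]
        split
        · omega
        · omega
  · rintro ⟨⟨g1, g2⟩, hv⟩
    have hAlast : ∀ c : Fin (n+2), ins (Fin.last (n+1)) A c = Fin.last (n+1) → c = Fin.last (n+1) := by
      intro c hc
      by_contra hne
      obtain ⟨x, rfl⟩ := Fin.exists_castSucc_eq.2 hne
      rw [haxis] at hc
      exact (Fin.castSucc_lt_last (A x)).ne hc
    constructor
    · intro c₁ c₂ c₃ ⟨h1, h2, h3, h4⟩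
      rcases eq_or_ne c₂ (Fin.last (n+1)) with rfl | hc₂
      · rw [haxislast] at h2; exact (Fin.le_last _).not_gt h2
      rcases eq_or_ne c₁ (Fin.last (n+1)) with rfl | hc₁
      · rw [haxislast] at h1; exact (Fin.le_last _).not_gt h1
      rcases eq_or_ne c₃ (Fin.last (n+1)) with rfl | hc₃
      · simp only [Equiv.Perm.one_apply] at h4
        exact (Fin.le_last _).not_gt h4
      obtain ⟨x, rfl⟩ := Fin.exists_castSucc_eq.2 hc₁
      obtain ⟨y, rfl⟩ := Fin.exists_castSucc_eq.2 hc₂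
      obtain ⟨z, rfl⟩ := Fin.exists_castSucc_eq.2 hc₃
      rw [haxis, haxis, Fin.castSucc_lt_castSucc_iff] at h1
      rw [haxis, haxis, Fin.castSucc_lt_castSucc_iff] at h2
      simp only [Equiv.Perm.one_apply, Fin.castSucc_lt_castSucc_iff] at h3 h4
      exact g1 x y z ⟨h1, h2, h3, h4⟩
    · intro c₁ c₂ c₃ ⟨h1, h2, h3, h4⟩
      rcases eq_or_ne c₂ (Fin.last (n+1)) with rfl | hc₂
      · rw [haxislast] at h2; exact (Fin.le_last _).not_gt h2
      rcases eq_or_ne c₁ (Fin.last (n+1)) with rfl | hc₁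
      · rw [haxislast] at h1; exact (Fin.le_last _).not_gt h1
      obtain ⟨x, rfl⟩ := Fin.exists_castSucc_eq.2 hc₁
      obtain ⟨y, rfl⟩ := Fin.exists_castSucc_eq.2 hc₂
      rw [haxis, haxis, Fin.castSucc_lt_castSucc_iff] at h1
      rw [ins_castSucc, ins_castSucc, Fin.succAbove_lt_succAbove_iff] at h3
      rcases eq_or_ne c₃ (Fin.last (n+1)) with rfl | hc₃
      · -- the interesting case
        rw [ins_last, ins_castSucc] at h4
        rw [Fin.lt_def, succAbove_val] at h4
        have hpy : (p:ℕ) ≤ (σ y : ℕ) := by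
          by_contra hh
          push_neg at hh
          simp only [if_pos hh] at h4
          omega
        set e := A.symm (Fin.last n) with he
        have hAe : A e = Fin.last n := A.apply_symm_apply _
        rcases eq_or_ne y e with rfl | hye
        · -- y = e : contradiction numerically
          rw [Fin.lt_def] at h3
          unfold tv at hv
          rw [← he] at hv
          omega
        · refine g2 x y e ⟨h1, ?_, h3, ?_⟩
          · rw [hAe]
            exact Fin.lt_last_iff_ne_last.2 fun hh => hye (A.injective (by rw [hh, hAe]))
          · rw [Fin.lt_def]
            unfold tv at hv
            rw [← he] at hv
            rw [Fin.lt_def] at h3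
            omega
      · obtain ⟨z, rfl⟩ := Fin.exists_castSucc_eq.2 hc₃
        rw [haxis, haxis, Fin.castSucc_lt_castSucc_iff] at h2
        rw [ins_castSucc, ins_castSucc, Fin.succAbove_lt_succAbove_iff] at h4
        exact g2 x y z ⟨h1, h2, h3, h4⟩


lemma eq_ins_of_last_eq {B : Equiv.Perm (Fin (n+2))} (hB : B (Fin.last (n+1)) = Fin.last (n+1)) :
    ∃ A', B = ins (Fin.last (n+1)) A' := by
  obtain ⟨q, A', rfl⟩ := ins_surj B
  rw [ins_last] at hB
  exact ⟨A', by rw [hB]⟩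

lemma exists_last_axis {τ : Equiv.Perm (Fin (n+2))} (h : SP τ) :
    ∃ A', Good τ (ins (Fin.last (n+1)) A') := by
  obtain ⟨A, hA⟩ := h
  have hend := worst_at_end hA.1 (b := Fin.last (n+1)) rfl
  rcases hend with hA0 | hAl
  · have hg := good_rev hA
    have hlast : (Fin.revPerm * A : Equiv.Perm (Fin (n+2))) (Fin.last (n+1)) = Fin.last (n+1) := by
      rw [Equiv.Perm.mul_apply, hA0, Fin.revPerm_apply, Fin.rev_zero]
    obtain ⟨A', hA'⟩ := eq_ins_of_last_eq hlast
    exact ⟨A', hA' ▸ hg⟩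
  · obtain ⟨A', hA'⟩ := eq_ins_of_last_eq hAl
    exact ⟨A', hA' ▸ hA⟩

lemma ins_last_symm_zero (B : Equiv.Perm (Fin (n+1))) :
    (ins (Fin.last (n+1)) B).symm 0 = (B.symm 0).castSucc := by
  rw [Equiv.symm_apply_eq, ins_castSucc, Fin.succAbove_last]
  simp

lemma ins_last_symm_last (B : Equiv.Perm (Fin (n+1))) :
    (ins (Fin.last (n+1)) B).symm (Fin.last (n+1)) = Fin.last (n+1) := by
  rw [Equiv.symm_apply_eq, ins_last]

lemma sp_ins_iff (p : Fin (n+2)) (σ : Equiv.Perm (Fin (n+1))) :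
    SP (ins p σ) ↔ (SP σ ∧ lab σ < max (p:ℕ) 1) := by
  constructor
  · intro h
    obtain ⟨A', hA'⟩ := exists_last_axis h
    rw [good_ins_iff] at hA'
    exact ⟨⟨A', hA'.1⟩, lt_of_le_of_lt (Nat.sInf_le (tv_mem_Jset hA'.1)) hA'.2⟩
  · rintro ⟨hsp, hlab⟩
    have hne : (Jset σ).Nonempty := by
      obtain ⟨A, hA⟩ := hsp; exact ⟨_, tv_mem_Jset hA⟩
    obtain ⟨A, hA, htv⟩ := Nat.sInf_mem hne
    exact ⟨_, (good_ins_iff p σ A).2 ⟨hA, by rw [htv]; exact hlab⟩⟩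

lemma lab_le {σ : Equiv.Perm (Fin (n+1))} (h : SP σ) : lab σ ≤ n := by
  obtain ⟨A, hA⟩ := h
  exact le_trans (Nat.sInf_le (tv_mem_Jset hA)) (Fin.is_le _)

lemma lab_ins_of_lt {p : Fin (n+2)} {σ : Equiv.Perm (Fin (n+1))} (hp : (p:ℕ) < n+1)
    (h : SP (ins p σ)) : lab (ins p σ) = (p:ℕ) := by
  obtain ⟨A', hA'⟩ := exists_last_axis h
  have hmem : (p:ℕ) ∈ Jset (ins p σ) := by
    refine ⟨_, hA', ?_⟩
    unfold tv
    rw [ins_last_symm_last, ins_last]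
  have hsub : ∀ v ∈ Jset (ins p σ), v = (p:ℕ) ∨ v = n+1 := by
    rintro v ⟨A, hA, rfl⟩
    set c := A.symm (Fin.last (n+1)) with hc
    have hAc : A c = Fin.last (n+1) := A.apply_symm_apply _
    set b := (ins p σ).symm (Fin.last (n+1)) with hb
    have hτb : (ins p σ) b = Fin.last (n+1) := (ins p σ).apply_symm_apply _
    rcases eq_or_ne c (Fin.last (n+1)) with hcl | hcl
    · left; unfold tv; rw [← hc, hcl, ins_last]
    rcases eq_or_ne c b with hcb | hcb
    · right; unfold tv; rw [← hc, hcb, hτb, Fin.val_last]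
    · exfalso
      have h1 := worst_at_end hA.1 (b := Fin.last (n+1)) rfl
      have h2 := worst_at_end hA.2 hτb
      have hl0 : A (Fin.last (n+1)) = 0 := by
        rcases h1 with h1 | h1
        · exact h1
        · exact absurd (A.injective (h1.trans hAc.symm)).symm hcl
      have hb0 : A b = 0 := by
        rcases h2 with h2 | h2
        · exact h2
        · exact absurd (A.injective (h2.trans hAc.symm)).symm hcb
      have : Fin.last (n+1) = b := A.injective (hl0.trans hb0.symm)
      rw [← this, ins_last] at hτb
      rw [hτb] at hp
      simp at hp
  have hle : lab (ins p σ) ≤ (p:ℕ) := Nat.sInf_le hmem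
  have hm : lab (ins p σ) ∈ Jset (ins p σ) := Nat.sInf_mem ⟨_, hmem⟩
  rcases hsub _ hm with hh | hh
  · exact hh
  · omega

lemma lab_ins_last {σ : Equiv.Perm (Fin (n+1))} (h : SP σ) :
    lab (ins (Fin.last (n+1)) σ) = lab σ := by
  have hne : (Jset σ).Nonempty := by
    obtain ⟨A, hA⟩ := h; exact ⟨_, tv_mem_Jset hA⟩
  have hlabmem : lab σ ∈ Jset σ := Nat.sInf_mem hne
  obtain ⟨A, hA, htv⟩ := hlabmem
  -- (1) lab σ ∈ Jset (ins last σ)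
  have h1 : lab σ ∈ Jset (ins (Fin.last (n+1)) σ) := by
    set B₁ := Fin.revPerm * A with hB₁
    have hgB₁ : Good σ B₁ := good_rev hA
    have hcond : tv σ B₁ < max ((Fin.last (n+1) : Fin (n+2)) : ℕ) 1 := by
      have : tv σ B₁ ≤ n := Fin.is_le _
      simp only [Fin.val_last]
      omega
    have hgood : Good (ins (Fin.last (n+1)) σ) (ins (Fin.last (n+1)) B₁) :=
      (good_ins_iff _ σ B₁).2 ⟨hgB₁, hcond⟩
    refine ⟨Fin.revPerm * (ins (Fin.last (n+1)) B₁), good_rev hgood, ?_⟩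
    rw [tv_rev]
    unfold bv
    rw [ins_last_symm_zero, ins_castSucc, Fin.succAbove_last]
    rw [Fin.coe_castSucc]
    have : bv σ B₁ = tv σ A := bv_rev σ A
    unfold bv at this
    rw [this, htv]
  -- (2) every element of Jset (ins last σ) is n+1 or in Jset σ
  have h2 : ∀ v ∈ Jset (ins (Fin.last (n+1)) σ), v = n+1 ∨ v ∈ Jset σ := by
    rintro v ⟨A₀, hA₀, rfl⟩
    have hend := worst_at_end hA₀.1 (b := Fin.last (n+1)) rfl
    rcases hend with h0 | hl
    · right
      set A₂ := Fin.revPerm * A₀ with hA₂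
      have hgA₂ : Good (ins (Fin.last (n+1)) σ) A₂ := good_rev hA₀
      have hlast : A₂ (Fin.last (n+1)) = Fin.last (n+1) := by
        rw [hA₂, Equiv.Perm.mul_apply, h0, Fin.revPerm_apply, Fin.rev_zero]
      obtain ⟨A'', hA''⟩ := eq_ins_of_last_eq hlast
      rw [hA''] at hgA₂
      have hgσ : Good σ A'' := ((good_ins_iff _ σ A'').1 hgA₂).1
      have : tv (ins (Fin.last (n+1)) σ) A₀ = bv (ins (Fin.last (n+1)) σ) A₂ := by
        rw [hA₂, bv_rev]
      rw [this, hA'']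
      unfold bv
      rw [ins_last_symm_zero, ins_castSucc, Fin.succAbove_last, Fin.coe_castSucc]
      exact bv_mem_Jset hgσ
    · left
      obtain ⟨A', hA'⟩ := eq_ins_of_last_eq hl
      unfold tv
      rw [hA', ins_last_symm_last, ins_last, Fin.val_last]
  have hτ : SP (ins (Fin.last (n+1)) σ) := by
    obtain ⟨A₁, hg, _⟩ := h1
    exact ⟨A₁, hg⟩
  have hle : lab (ins (Fin.last (n+1)) σ) ≤ lab σ := Nat.sInf_le h1
  have hm : lab (ins (Fin.last (n+1)) σ) ∈ Jset (ins (Fin.last (n+1)) σ) :=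
    Nat.sInf_mem ⟨_, h1⟩
  rcases h2 _ hm with hh | hh
  · have := lab_le h
    omega
  · exact le_antisymm hle (Nat.sInf_le hh)

def F : ℕ → ℕ → ℕ
  | 0, j => if j = 0 then 1 else 0
  | (n+1), j => if j < n+1 then F n j + ∑ i ∈ Finset.range (max j 1), F n i else 0

def Sset (n : ℕ) (j : ℕ) : Set (Equiv.Perm (Fin (n+1))) := {σ | SP σ ∧ lab σ = j}

lemma sp_one : SP (1 : Equiv.Perm (Fin 1)) := by
  refine ⟨1, ?_, ?_⟩ <;>
  · intro c₁ c₂ c₃ ⟨h1, _⟩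
    have hc : c₁ = c₂ := Fin.ext (by omega)
    exact absurd (hc ▸ h1) (lt_irrefl _)

lemma base_count (j : ℕ) : (Sset 0 j).ncard = F 0 j := by
  have hall : ∀ σ : Equiv.Perm (Fin (0+1)), σ = 1 := fun σ =>
    Equiv.ext fun x => Fin.ext (by omega)
  rcases Nat.eq_zero_or_pos j with rfl | hj
  · have : Sset 0 0 = Set.univ := by
      ext σ
      simp only [Sset, Set.mem_setOf_eq, Set.mem_univ, iff_true]
      rw [hall σ]
      exact ⟨sp_one, Nat.le_zero.1 (lab_le sp_one)⟩
    rw [this, Set.ncard_univ]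
    simp [F, Nat.card_eq_fintype_card]
  · have : Sset 0 j = ∅ := by
      ext σ
      simp only [Sset, Set.mem_setOf_eq, Set.mem_empty_iff_false, iff_false, not_and]
      intro hsp
      have := lab_le hsp
      omega
    rw [this, Set.ncard_empty, F]
    rw [if_neg (by omega)]

lemma ins_injective (p : Fin (n+2)) : Function.Injective (fun σ => ins p σ) :=
  fun _ _ h => (ins_inj h).2

lemma lower_count (n t : ℕ) (h : ∀ j, (Sset n j).ncard = F n j) :
    {σ : Equiv.Perm (Fin (n+1)) | SP σ ∧ lab σ < t}.ncard = ∑ i ∈ Finset.range t, F n i := by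
  induction t with
  | zero => simp
  | succ t ih =>
    have hsplit : {σ : Equiv.Perm (Fin (n+1)) | SP σ ∧ lab σ < t + 1} =
        {σ | SP σ ∧ lab σ < t} ∪ Sset n t := by
      ext σ
      simp only [Set.mem_setOf_eq, Set.mem_union, Sset]
      constructor
      · rintro ⟨hs, hl⟩
        rcases Nat.lt_or_ge (lab σ) t with hh | hh
        · exact Or.inl ⟨hs, hh⟩
        · exact Or.inr ⟨hs, by omega⟩
      · rintro (⟨hs, hl⟩ | ⟨hs, hl⟩)
        · exact ⟨hs, by omega⟩
        · exact ⟨hs, by omega⟩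
    rw [hsplit, Set.ncard_union_eq ?_ (Set.toFinite _) (Set.toFinite _), ih,
      Finset.sum_range_succ, h t]
    rw [Set.disjoint_left]
    rintro σ ⟨_, hl⟩ ⟨_, hl'⟩
    omega

lemma step_count (n : ℕ) (ih : ∀ j, (Sset n j).ncard = F n j) (j : ℕ) :
    (Sset (n+1) j).ncard = F (n+1) j := by
  rcases Nat.lt_or_ge j (n+1) with hj | hj
  · set jf : Fin (n+2) := ⟨j, by omega⟩ with hjf
    have hsplit : Sset (n+1) j =
        (fun σ => ins jf σ) '' {σ | SP σ ∧ lab σ < max j 1}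
        ∪ (fun σ => ins (Fin.last (n+1)) σ) '' Sset n j := by
      ext τ
      simp only [Sset, Set.mem_setOf_eq, Set.mem_union, Set.mem_image]
      constructor
      · rintro ⟨hsp, hlab⟩
        obtain ⟨p, σ, rfl⟩ := ins_surj τ
        obtain ⟨hσ, hσl⟩ := (sp_ins_iff p σ).1 hsp
        rcases Nat.lt_or_ge (p : ℕ) (n+1) with hp | hp
        · left
          have hpj : (p : ℕ) = j := by rw [← lab_ins_of_lt hp hsp]; exact hlab
          have : p = jf := Fin.ext (by rw [hpj])
          exact ⟨σ, ⟨hσ, by rw [← hpj]; exact hσl⟩, by rw [this]⟩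
        · right
          have hpl : p = Fin.last (n+1) := Fin.ext (by
            simp only [Fin.val_last]
            have := p.is_le
            omega)
          subst hpl
          rw [lab_ins_last hσ] at hlab
          exact ⟨σ, ⟨hσ, hlab⟩, rfl⟩
      · rintro (⟨σ, ⟨hσ, hσl⟩, rfl⟩ | ⟨σ, ⟨hσ, hσl⟩, rfl⟩)
        · have hv : (jf : ℕ) = j := rfl
          have hsp : SP (ins jf σ) := (sp_ins_iff jf σ).2 ⟨hσ, by rw [hv]; exact hσl⟩
          exact ⟨hsp, by rw [lab_ins_of_lt (by rw [hv]; omega) hsp, hv]⟩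
        · have hsp : SP (ins (Fin.last (n+1)) σ) := by
            refine (sp_ins_iff _ σ).2 ⟨hσ, ?_⟩
            have := lab_le hσ
            simp only [Fin.val_last]
            omega
          exact ⟨hsp, by rw [lab_ins_last hσ, hσl]⟩
    rw [hsplit, Set.ncard_union_eq ?_ (Set.toFinite _) (Set.toFinite _),
      Set.ncard_image_of_injective _ (ins_injective jf),
      Set.ncard_image_of_injective _ (ins_injective (Fin.last (n+1))),
      lower_count n (max j 1) ih, ih j]
    · show _ = F (n+1) j
      rw [F, if_pos hj]
      omega
    · rw [Set.disjoint_left]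
      rintro τ ⟨σ, _, rfl⟩ ⟨σ', _, hins⟩
      have := (ins_inj hins).1
      have : (Fin.last (n+1) : Fin (n+2)).val = jf.val := by rw [this]
      simp only [Fin.val_last] at this
      have : jf.val = j := rfl
      omega
  · have : Sset (n+1) j = ∅ := by
      ext τ
      simp only [Sset, Set.mem_setOf_eq, Set.mem_empty_iff_false, iff_false, not_and]
      intro hsp
      obtain ⟨p, σ, rfl⟩ := ins_surj τ
      obtain ⟨hσ, _⟩ := (sp_ins_iff p σ).1 hsp
      rcases Nat.lt_or_ge (p : ℕ) (n+1) with hp | hp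
      · rw [lab_ins_of_lt hp hsp]
        omega
      · have hpl : p = Fin.last (n+1) := Fin.ext (by
          simp only [Fin.val_last]
          have := p.is_le
          omega)
        subst hpl
        rw [lab_ins_last hσ]
        have := lab_le hσ
        omega
    rw [this, Set.ncard_empty, F, if_neg (by omega)]

lemma main_count : ∀ n j, (Sset n j).ncard = F n j := by
  intro n
  induction n with
  | zero => exact base_count
  | succ n ih => exact step_count n ih

lemma sp_count (n : ℕ) :
    {σ : Equiv.Perm (Fin (n+1)) | SP σ}.ncard = ∑ i ∈ Finset.range (n+1), F n i := by
  have : {σ : Equiv.Perm (Fin (n+1)) | SP σ} =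
      {σ : Equiv.Perm (Fin (n+1)) | SP σ ∧ lab σ < n+1} := by
    ext σ
    simp only [Set.mem_setOf_eq, iff_self_and, and_iff_left_iff_imp]
    intro hsp
    have := lab_le hsp
    omega
  rw [this, lower_count n (n+1) (main_count n)]

def GS (n j : ℕ) : ℕ := ∑ i ∈ Finset.range (j+1), F n i

def CF (n j : ℕ) : ℕ :=
  if j = 0 then 2^n
  else ∑ t ∈ Finset.range (n+1-j), 2^(n+1-j-t) * Nat.choose (2*j-1+t) (j-1)

lemma CF_zero (n : ℕ) : CF n 0 = 2^n := by simp [CF]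

lemma central_halve {m : ℕ} (h : 1 ≤ m) : (2*m).choose m = 2 * ((2*m-1).choose (m-1)) := by
  obtain ⟨k, rfl⟩ : ∃ k, m = k + 1 := ⟨m - 1, by omega⟩
  rw [show 2*(k+1) = (2*k+1)+1 from by ring, show (2*k+1)+1-1 = 2*k+1 from by omega,
    show k+1-1 = k from by omega, Nat.choose_succ_succ]
  have hs : (2*k+1).choose (k+1) = (2*k+1).choose k := by
    rw [← Nat.choose_symm (by omega : k + 1 ≤ 2*k+1)]
    congr 1
    omega
  rw [hs]
  ring

lemma pow2sum (m : ℕ) : ∑ t ∈ Finset.range m, 2^(m-t) = 2^(m+1) - 2 := by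
  induction m with
  | zero => simp
  | succ m ih =>
    rw [Finset.sum_range_succ']
    have hc : ∀ t ∈ Finset.range m, 2^(m+1-(t+1)) = 2^(m-t) := by
      intro t ht; congr 1; omega
    rw [Finset.sum_congr rfl hc, ih, Nat.sub_zero]
    have h1 : (2:ℕ) ≤ 2^(m+1) := by
      calc (2:ℕ) = 2^1 := rfl
      _ ≤ 2^(m+1) := Nat.pow_le_pow_right (by omega) (by omega)
    have h2 : (2:ℕ)^(m+2) = 2 * 2^(m+1) := pow_succ' 2 _
    omega

lemma CF_B1 {n j : ℕ} (hj : 1 ≤ j) (hjn : j ≤ n) :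
    CF (n+1) j = CF (n+1) (j-1) + CF n j := by
  rcases eq_or_lt_of_le hj with rfl | hj2
  · -- j = 1
    rw [show (1:ℕ)-1 = 0 from rfl, CF_zero]
    simp only [CF, if_neg (one_ne_zero)]
    have e1 : ∀ t ∈ Finset.range (n+1+1-1), 2^(n+1+1-1-t) * Nat.choose (2*1-1+t) (1-1)
        = 2^(n+1-t) := by
      intro t ht
      norm_num
    have e2 : ∀ t ∈ Finset.range (n+1-1), 2^(n+1-1-t) * Nat.choose (2*1-1+t) (1-1)
        = 2^(n-t) := by
      intro t ht
      norm_num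
    rw [Finset.sum_congr rfl e1, Finset.sum_congr rfl e2]
    rw [show n+1+1-1 = n+1 from by omega, show n+1-1 = n from by omega, pow2sum, pow2sum]
    have h1 : (2:ℕ) ≤ 2^(n+1) := by
      calc (2:ℕ) = 2^1 := rfl
      _ ≤ 2^(n+1) := Nat.pow_le_pow_right (by omega) (by omega)
    have h2 : (2:ℕ)^(n+2) = 2 * 2^(n+1) := pow_succ' 2 _
    omega
  · -- j ≥ 2
    obtain ⟨d, rfl⟩ : ∃ d, n = j + d := ⟨n - j, by omega⟩
    simp only [CF, if_neg (by omega : j ≠ 0), if_neg (by omega : j - 1 ≠ 0),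
      show j+d+1+1-j = d+2 from by omega, show j+d+1-j = d+1 from by omega,
      show j+d+1+1-(j-1) = d+3 from by omega]
    have pascal : ∀ t ∈ Finset.range (d+2),
        2^(d+2-t) * Nat.choose (2*j-1+t) (j-1) =
        2^(d+2-t) * Nat.choose (2*j-2+t) (j-2) + 2^(d+2-t) * Nat.choose (2*j-2+t) (j-1) := by
      intro t ht
      rw [show 2*j-1+t = (2*j-2+t) + 1 from by omega, show j-1 = (j-2) + 1 from by omega,
        Nat.choose_succ_succ, Nat.mul_add]
    rw [Finset.sum_congr rfl pascal, Finset.sum_add_distrib]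
    have esa : ∑ t ∈ Finset.range (d+3), 2^(d+3-t) * Nat.choose (2*(j-1)-1+t) (j-1-1) =
        2^(d+3) * Nat.choose (2*j-3) (j-2)
          + ∑ t ∈ Finset.range (d+2), 2^(d+2-t) * Nat.choose (2*j-2+t) (j-2) := by
      rw [Finset.sum_range_succ']
      have hc : ∀ t ∈ Finset.range (d+2),
          2^(d+3-(t+1)) * Nat.choose (2*(j-1)-1+(t+1)) (j-1-1)
          = 2^(d+2-t) * Nat.choose (2*j-2+t) (j-2) := by
        intro t ht
        rw [show d+3-(t+1) = d+2-t from by omega, show 2*(j-1)-1+(t+1) = 2*j-2+t from by omega,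
          show j-1-1 = j-2 from by omega]
      rw [Finset.sum_congr rfl hc,
        show 2*(j-1)-1+0 = 2*j-3 from by omega, show j-1-1 = j-2 from by omega, Nat.sub_zero]
      omega
    have esb : ∑ t ∈ Finset.range (d+2), 2^(d+2-t) * Nat.choose (2*j-2+t) (j-1) =
        2^(d+2) * Nat.choose (2*j-2) (j-1)
          + ∑ t ∈ Finset.range (d+1), 2^(d+1-t) * Nat.choose (2*j-1+t) (j-1) := by
      rw [Finset.sum_range_succ']
      have hc : ∀ t ∈ Finset.range (d+1),
          2^(d+2-(t+1)) * Nat.choose (2*j-2+(t+1)) (j-1)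
          = 2^(d+1-t) * Nat.choose (2*j-1+t) (j-1) := by
        intro t ht
        rw [show d+2-(t+1) = d+1-t from by omega, show 2*j-2+(t+1) = 2*j-1+t from by omega]
      rw [Finset.sum_congr rfl hc, show 2*j-2+0 = 2*j-2 from rfl,
        show d+2-0 = d+2 from rfl]
      omega
    rw [esa, esb]
    have key : 2^(d+2) * Nat.choose (2*j-2) (j-1) = 2^(d+3) * Nat.choose (2*j-3) (j-2) := by
      have h := central_halve (m := j-1) (by omega)
      rw [show 2*(j-1)-1 = 2*j-3 from by omega, show j-1-1 = j-2 from by omega,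
        show 2*(j-1) = 2*j-2 from by omega] at h
      rw [h, show (2:ℕ)^(d+3) = 2^(d+2) * 2 from by ring]
      ring
    omega

lemma CF_B2 (n : ℕ) : CF (n+1) (n+1) = CF (n+1) n := by
  have hL : CF (n+1) (n+1) = 2 * Nat.choose (2*n+1) n := by
    simp only [CF, if_neg (Nat.succ_ne_zero n), show n+1+1-(n+1) = 1 from by omega]
    rw [Finset.sum_range_one, show 2*(n+1)-1+0 = 2*n+1 from by omega,
      show n+1-1 = n from by omega]
    norm_num
  rcases Nat.eq_zero_or_pos n with rfl | hn
  · rw [hL, CF_zero]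
    norm_num
  obtain ⟨k, rfl⟩ : ∃ k, n = k + 1 := ⟨n - 1, by omega⟩
  have hR : CF (k+1+1) (k+1) = 2^2 * Nat.choose (2*k+1) k + 2 * Nat.choose (2*k+2) k := by
    simp only [CF, if_neg (Nat.succ_ne_zero k), show k+1+1+1-(k+1) = 2 from by omega]
    rw [Finset.sum_range_succ, Finset.sum_range_one]
    rw [show 2*(k+1)-1+0 = 2*k+1 from by omega, show 2*(k+1)-1+1 = 2*k+2 from by omega,
      show k+1-1 = k from by omega]
    norm_num
  rw [hL, hR]
  have hp : Nat.choose (2*(k+1)+1) (k+1) = Nat.choose (2*(k+1)) k + Nat.choose (2*(k+1)) (k+1) :=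
    Nat.choose_succ_succ _ _
  have hh := central_halve (m := k+1) (by omega)
  rw [show 2*(k+1)-1 = 2*k+1 from by omega, show k+1-1 = k from by omega] at hh
  rw [show 2*(k+1)+1 = 2*k+3 from by omega] at hp
  rw [show 2*(k+1) = 2*k+2 from by omega] at hp hh
  rw [show 2*(k+1)+1 = 2*k+3 from by omega]
  omega

lemma F_zero (n : ℕ) : F n 0 = 2^n := by
  induction n with
  | zero => simp [F]
  | succ n ih =>
    rw [F, if_pos (Nat.succ_pos n), show max 0 1 = 1 from rfl, Finset.sum_range_one, ih]
    rw [pow_succ]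
    omega

lemma F_top {n j : ℕ} (h : n+1 ≤ j) : F (n+1) j = 0 := by
  rw [F, if_neg (by omega)]

lemma GS_succ (n j : ℕ) : GS n (j+1) = GS n j + F n (j+1) := Finset.sum_range_succ _ _

lemma F_rec {n j : ℕ} (h : j+1 ≤ n) : F (n+1) (j+1) = F n (j+1) + GS n j := by
  cases n with
  | zero => omega
  | succ n =>
    show F (n+1+1) (j+1) = _
    rw [F, if_pos (by omega), show max (j+1) 1 = j+1 from by omega]
    rfl

lemma GS_horiz {n j : ℕ} (h : j+1 ≤ n) : GS (n+1) (j+1) = GS (n+1) j + GS n (j+1) := by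
  rw [GS_succ, F_rec h, GS_succ]
  ring

lemma GS_top (n : ℕ) : GS (n+1) (n+1) = GS (n+1) n := by
  rw [GS_succ, F_top (by omega), Nat.add_zero]

lemma GS_zero (n : ℕ) : GS n 0 = 2^n := by
  rw [GS, Finset.sum_range_one, F_zero]

lemma GS_eq_CF : ∀ n j, j ≤ n → GS n j = CF n j := by
  intro n
  induction n with
  | zero =>
    intro j hj
    interval_cases j
    rw [GS_zero, CF_zero]
  | succ n ih =>
    intro j
    induction j with
    | zero =>
      intro _
      rw [GS_zero, CF_zero]
    | succ j ihj =>
      intro hj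
      rcases Nat.lt_or_ge (j+1) (n+1) with hlt | hge
      · have hb := CF_B1 (n := n) (j := j+1) (by omega) (by omega)
        rw [show j+1-1 = j from rfl] at hb
        rw [GS_horiz (by omega), ihj (by omega), ih (j+1) (by omega), hb]
      · have hj' : j = n := by omega
        subst hj'
        rw [GS_top, CF_B2]
        exact ihj (by omega)

lemma total_eq (n : ℕ) : ∑ i ∈ Finset.range (n+1), F n i = Nat.choose (2*n) n := by
  have h1 : ∑ i ∈ Finset.range (n+1), F n i = GS n n := rfl
  rw [h1, GS_eq_CF n n le_rfl]
  rcases Nat.eq_zero_or_pos n with rfl | hn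
  · rw [CF_zero]
    norm_num
  · simp only [CF, if_neg (by omega : n ≠ 0), show n+1-n = 1 from by omega]
    rw [Finset.sum_range_one, show 2*n-1+0 = 2*n-1 from by omega]
    norm_num
    exact (central_halve hn).symm


lemma sp_total (n : ℕ) :
    {σ : Equiv.Perm (Fin (n+1)) | SP σ}.ncard = Nat.choose (2*n) n := by
  rw [sp_count, total_eq]

lemma phi_injective (n : ℕ) :
    Function.Injective (fun P : Fin 2 → Equiv.Perm (Fin (n+1)) => (P 0, P 1 * (P 0)⁻¹)) := by
  intro P Q h
  simp only [Prod.mk.injEq] at h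
  obtain ⟨h0, h1⟩ := h
  rw [h0] at h1
  have h1' : P 1 = Q 1 := by
    have := congrArg (fun x => x * (Q 0)) h1
    simpa [mul_assoc] using this
  funext i
  match i with
  | 0 => exact h0
  | 1 => exact h1'

lemma phi_image (n : ℕ) :
    (fun P : Fin 2 → Equiv.Perm (Fin (n+1)) => (P 0, P 1 * (P 0)⁻¹)) ''
        {P | SPElection P} =
      (Set.univ : Set (Equiv.Perm (Fin (n+1)))) ×ˢ {σ | SP σ} := by
  ext ⟨V, σ⟩
  constructor
  · rintro ⟨P, hP, heq⟩
    simp only [Prod.mk.injEq] at heq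
    obtain ⟨h0, h1⟩ := heq
    refine ⟨Set.mem_univ _, ?_⟩
    rw [← h1]
    exact (spElection_iff P).1 hP
  · rintro ⟨-, hσ⟩
    refine ⟨![V, σ * V], ?_, ?_⟩
    · rw [Set.mem_setOf_eq, spElection_iff]
      simp only [Matrix.cons_val_one, Matrix.head_cons, Matrix.cons_val_zero]
      rw [mul_inv_cancel_right]
      exact hσ
    · simp only [Matrix.cons_val_one, Matrix.head_cons, Matrix.cons_val_zero]
      rw [mul_inv_cancel_right]

lemma prod_ncard (n : ℕ) (T : Set (Equiv.Perm (Fin (n+1)))) :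
    ((Set.univ : Set (Equiv.Perm (Fin (n+1)))) ×ˢ T).ncard =
      Nat.factorial (n+1) * T.ncard := by
  rw [← Nat.card_coe_set_eq, ← Nat.card_coe_set_eq]
  rw [Nat.card_congr (Equiv.Set.prod _ _), Nat.card_prod]
  congr 1
  rw [Nat.card_congr (Equiv.Set.univ _), Nat.card_eq_fintype_card, Fintype.card_perm,
    Fintype.card_fin]

end SPAux


/-- The number of single-peaked elections with exactly 2 voters and `m ≥ 1`
candidates equals `m! · C(2m−2, m−1)`. -/
theorem count_single_peaked_two_voters (m : ℕ) (hm : 1 ≤ m) :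
    {P : Fin 2 → Equiv.Perm (Fin m) | SPElection P}.ncard =
      Nat.factorial m * Nat.choose (2 * m - 2) (m - 1) := by
  obtain ⟨n, rfl⟩ : ∃ n, m = n + 1 := ⟨m - 1, by omega⟩
  have himg := SPAux.phi_image n
  have hcard : {P : Fin 2 → Equiv.Perm (Fin (n+1)) | SPElection P}.ncard =
      ((Set.univ : Set (Equiv.Perm (Fin (n+1)))) ×ˢ {σ : Equiv.Perm (Fin (n+1)) | SPAux.SP σ}).ncard := by
    rw [← himg, Set.ncard_image_of_injective _ (SPAux.phi_injective n)]
  rw [hcard, SPAux.prod_ncard, SPAux.sp_total]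
  rw [show 2 * (n+1) - 2 = 2 * n from by omega, show n + 1 - 1 = n from by omega]
end

section
/- The number of single-peaked (n,3)-elections equals 6 · 2^{n-1} · (2^n − 1). -/
/-!
On a three-candidate axis only the middle candidate can sit in a valley, and it does so exactly
when it is ranked last. Hence an election is single-peaked iff some candidate is never ranked
last. Each of the three events "`c` is never last" allows `4 ^ n` elections, any two of them
together `2 ^ n`, all three none; inclusion–exclusion gives `3 · 4 ^ n - 3 · 2 ^ n`.
-/

open Finset

theorem Finset.card_union_union_add_card_inter {α : Type*} [DecidableEq α] (A B C : Finset α) :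
    #(A ∪ B ∪ C) + #(A ∩ B) + #(A ∩ C) + #(B ∩ C) = #A + #B + #C + #(A ∩ B ∩ C) := by
  have hAB := card_union_add_card_inter A B
  have hABC := card_union_add_card_inter (A ∪ B) C
  have hACBC := card_union_add_card_inter (A ∩ C) (B ∩ C)
  rw [union_inter_distrib_right] at hABC
  rw [← inter_inter_distrib_right] at hACBC
  omega

-- A vote maps candidates to positions, so `V.symm 2` is the candidate it ranks last.
theorem spwrt_iff_symm_two_ne (V A : Equiv.Perm (Fin 3)) : SPwrt V A ↔ V.symm 2 ≠ A.symm 1 := by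
  unfold SPwrt; revert V A; decide

theorem spElection_iff_exists_forall_symm_two_ne {n : ℕ} (P : Fin n → Equiv.Perm (Fin 3)) :
    SPElection P ↔ ∃ c, ∀ i, (P i).symm 2 ≠ c := by
  simp only [SPElection, spwrt_iff_symm_two_ne]
  constructor
  · rintro ⟨A, hA⟩
    exact ⟨A.symm 1, hA⟩
  · rintro ⟨c, hc⟩
    exact ⟨Equiv.swap 1 c, by simpa using hc⟩

def neverLast (n : ℕ) (S : Finset (Fin 3)) : Finset (Fin n → Equiv.Perm (Fin 3)) :=
  Fintype.piFinset fun _ ↦ {V | V.symm 2 ∉ S}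

theorem neverLast_inter (n : ℕ) (S T : Finset (Fin 3)) :
    neverLast n S ∩ neverLast n T = neverLast n (S ∪ T) := by
  simp only [neverLast, ← Fintype.piFinset_inter, ← filter_and, mem_union, not_or]

theorem card_filter_symm_two_notMem (S : Finset (Fin 3)) :
    #{V : Equiv.Perm (Fin 3) | V.symm 2 ∉ S} = 2 * (3 - #S) := by
  revert S; decide

theorem card_neverLast (n : ℕ) (S : Finset (Fin 3)) : #(neverLast n S) = (2 * (3 - #S)) ^ n := by
  rw [neverLast, Fintype.card_piFinset_const, card_filter_symm_two_notMem]

theorem setOf_spElection_eq (n : ℕ) :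
    {P : Fin n → Equiv.Perm (Fin 3) | SPElection P} =
      ↑(neverLast n {0} ∪ neverLast n {1} ∪ neverLast n {2}) := by
  ext P
  simp [spElection_iff_exists_forall_symm_two_ne, neverLast, Fin.exists_fin_succ]

/-- The number of single-peaked `(n,3)`-elections equals `6 · 2^(n−1) · (2^n − 1)`. -/
theorem count_single_peaked_three_candidates (n : ℕ) (hn : 1 ≤ n) :
    {P : Fin n → Equiv.Perm (Fin 3) | SPElection P}.ncard =
      6 * 2 ^ (n - 1) * (2 ^ n - 1) := by
  have h := card_union_union_add_card_inter (neverLast n {0}) (neverLast n {1}) (neverLast n {2})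
  have hcard : #({0} ∪ {1} : Finset (Fin 3)) = 2 ∧ #({0} ∪ {2} : Finset (Fin 3)) = 2 ∧
      #({1} ∪ {2} : Finset (Fin 3)) = 2 ∧ #({0} ∪ {1} ∪ {2} : Finset (Fin 3)) = 3 := by decide
  simp only [neverLast_inter, card_neverLast, hcard, card_singleton] at h
  rw [setOf_spElection_eq, Set.ncard_coe_finset]
  obtain ⟨k, rfl⟩ := Nat.exists_eq_add_of_le' hn
  have h2k : 1 ≤ 2 ^ (k + 1) := Nat.one_le_two_pow
  rw [add_tsub_cancel_right]
  zify [h2k] at h ⊢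
  linear_combination h - 12 * (mul_pow (2 : ℤ) 2 k).symm
end

section
/- An election with three candidates is single-peaked if and only if the set of candidates ranked last across all votes has cardinality at most 2. -/
theorem Set.ncard_lt_card_iff_ne_univ {α : Type*} [Finite α] {s : Set α} :
    s.ncard < Nat.card α ↔ s ≠ Set.univ :=
  ⟨fun h hs => by simp [hs] at h, Set.ncard_lt_card⟩

theorem spwrt_three_iff (V A : Equiv.Perm (Fin 3)) : SPwrt V A ↔ V (A.symm 1) ≠ 2 := by
  constructor
  · intro hSP hlast
    have hlt {k : Fin 3} (hk : k ≠ 1) : V (A.symm k) < V (A.symm 1) := by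
      rw [hlast]
      have : V (A.symm k) ≠ V (A.symm 1) := by simpa using hk
      omega
    refine hSP (A.symm 0) (A.symm 1) (A.symm 2) ⟨?_, ?_, hlt (by decide), hlt (by decide)⟩ <;> simp
  · rintro hmid c₁ c₂ c₃ ⟨hA₁₂, hA₂₃, hV₁₂, hV₃₂⟩
    have hc₂ : c₂ = A.symm 1 := A.eq_symm_apply.mpr (by omega)
    have hV₁₃ : V c₁ ≠ V c₃ := V.injective.ne (ne_of_apply_ne A (by omega))
    rw [← hc₂] at hmid
    omega

theorem spElection_three_iff {n : ℕ} (P : Fin n → Equiv.Perm (Fin 3)) :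
    SPElection P ↔ ∃ c, ∀ i, P i c ≠ 2 := by
  simp only [SPElection, spwrt_three_iff]
  constructor
  · rintro ⟨A, hA⟩
    exact ⟨A.symm 1, hA⟩
  · rintro ⟨c, hc⟩
    exact ⟨Equiv.swap 1 c, by simpa using hc⟩

/-- An election with three candidates is single-peaked if and only if the set of
candidates ranked last (rank `2`, the lowest of the three ranks) in some vote has
cardinality at most 2. -/
theorem single_peaked_iff_at_most_two_last (n : ℕ) (P : Fin n → Equiv.Perm (Fin 3)) :
    SPElection P ↔ {c : Fin 3 | ∃ i, P i c = 2}.ncard ≤ 2 := by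
  have hcard : Nat.card (Fin 3) = 2 + 1 := Nat.card_fin 3
  rw [spElection_three_iff, ← Nat.lt_add_one_iff, ← hcard, Set.ncard_lt_card_iff_ne_univ, Ne,
    Set.eq_univ_iff_forall]
  simp
end

section
/- If an election contains both a vote V and its reverse V̄, and the election is single-peaked with respect to an axis A, then A equals V or V̄ (viewed as linear orders on the candidates). -/
/-- The reverse of a vote `V`: all comparisons are reversed
(rank `r` becomes rank `m − 1 − r`). -/
def revVote {m : ℕ} (V : Equiv.Perm (Fin m)) : Equiv.Perm (Fin m) :=
  V.trans (Fin.revPerm)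

section NoTurn

variable {α β : Type*} [LinearOrder α] [LinearOrder β] {f : α → β}

theorem lt_iff_lt_of_lt_of_lt_of_forall_lt_iff_lt
    (hturn : ∀ a b c, a < b → b < c → (f a < f b ↔ f b < f c)) {a b c : α}
    (hab : a < b) (hbc : b < c) : f a < f b ↔ f a < f c := by
  refine ⟨fun h => h.trans ((hturn a b c hab hbc).1 h), fun h => ?_⟩
  by_contra hba
  have hcb : f c ≤ f b := not_lt.1 (mt (hturn a b c hab hbc).2 hba)
  exact (hcb.trans (not_lt.1 hba)).not_gt h

theorem lt_iff_lt_of_le_of_le_of_forall_lt_iff_lt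
    (hturn : ∀ a b c, a < b → b < c → (f a < f b ↔ f b < f c)) {a b x y : α}
    (hxa : x ≤ a) (hab : a < b) (hby : b ≤ y) : f a < f b ↔ f x < f y := by
  have extend_right : f x < f b ↔ f x < f y := by
    rcases hby.eq_or_lt with rfl | hby
    · rfl
    · exact lt_iff_lt_of_lt_of_lt_of_forall_lt_iff_lt hturn (hxa.trans_lt hab) hby
  rw [← extend_right]
  rcases hxa.eq_or_lt with rfl | hxa
  · rfl
  · exact (hturn x a b hxa hab).symm.trans
      (lt_iff_lt_of_lt_of_lt_of_forall_lt_iff_lt hturn hxa hab)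

theorem strictMono_or_strictAnti_of_forall_lt_iff_lt (hf : Function.Injective f)
    (hturn : ∀ a b c, a < b → b < c → (f a < f b ↔ f b < f c)) :
    StrictMono f ∨ StrictAnti f := by
  by_cases hmono : StrictMono f
  · exact Or.inl hmono
  obtain ⟨a, b, hab, hba⟩ : ∃ a b, a < b ∧ ¬f a < f b := by
    simpa [StrictMono] using hmono
  refine Or.inr fun c d hcd => lt_of_le_of_ne (not_lt.1 ?_) (hf.ne hcd.ne')
  -- both pairs `a < b` and `c < d` have the same direction as the pair enclosing them
  rwa [lt_iff_lt_of_le_of_le_of_forall_lt_iff_lt hturn (min_le_right a c) hcd (le_max_right b d),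
    ← lt_iff_lt_of_le_of_le_of_forall_lt_iff_lt hturn (min_le_left a c) hab (le_max_left b d)]

end NoTurn

theorem Fin.eq_rev_of_strictAnti {m : ℕ} {f : Fin m → Fin m} (hf : StrictAnti f) :
    f = Fin.rev := by
  have hrev : Fin.rev ∘ f = id := StrictMono.eq_id fun _ _ h => Fin.rev_lt_rev.2 (hf h)
  funext x
  simpa using congrArg Fin.rev (congrFun hrev x)

theorem lt_iff_lt_of_SPwrt_of_SPwrt_revVote {m : ℕ} {V A : Equiv.Perm (Fin m)}
    (hV : SPwrt V A) (hR : SPwrt (revVote V) A) (a b c : Fin m) (hab : a < b) (hbc : b < c) :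
    V (A.symm a) < V (A.symm b) ↔ V (A.symm b) < V (A.symm c) := by
  have no_peak := hV (A.symm a) (A.symm b) (A.symm c)
  have no_valley := hR (A.symm a) (A.symm b) (A.symm c)
  simp only [Equiv.apply_symm_apply, revVote, Equiv.trans_apply, Fin.revPerm_apply,
    Fin.rev_lt_rev] at no_peak no_valley
  constructor
  · intro h
    by_contra hcb
    exact no_peak ⟨hab, hbc, h, lt_of_le_of_ne (not_lt.1 hcb) (by simpa using hbc.ne')⟩
  · intro h
    by_contra hba
    exact no_valley ⟨hab, hbc, lt_of_le_of_ne (not_lt.1 hba) (by simpa using hab.ne'), h⟩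

/-- If an election contains both a vote `V` and its reverse `V̄`, and the election
is single-peaked with respect to an axis `A`, then `A = V` or `A = V̄`
(as linear orders on the candidates). -/
theorem axis_eq_of_vote_and_reverse {n m : ℕ} (P : Fin n → Equiv.Perm (Fin m))
    (V A : Equiv.Perm (Fin m)) (i j : Fin n) (hi : P i = V) (hj : P j = revVote V)
    (hSP : ∀ k, SPwrt (P k) A) :
    A = V ∨ A = revVote V := by
  have hturn := lt_iff_lt_of_SPwrt_of_SPwrt_revVote (hi ▸ hSP i) (hj ▸ hSP j)
  rcases strictMono_or_strictAnti_of_forall_lt_iff_lt (A.symm.trans V).injective hturn with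
    hmono | hanti
  · left
    exact Equiv.ext fun x => by simpa using (hmono.apply_eq (x := A x)).symm
  · right
    refine Equiv.ext fun x => ?_
    have hVx : V x = (A x).rev := by simpa using congrFun (Fin.eq_rev_of_strictAnti hanti) (A x)
    simp [revVote, hVx]
end
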